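/- arXiv:0712.1753 — 10 statements merged into one kernel-verified Lean document; each statement's English description precedes it below -/
import Mathlib

section
/- Let A be a finite set with at least 2 elements, B a set, n a positive integer with n ≠ 2, and let A^n_= denote the set of tuples (a_1,...,a_n) in A^n having at least two equal coordinates (with A^1_= = A). If f : A^n_= → B is a partial function whose essential variables are exactly x_1,...,x_m (a variable x_i is essential if there exist two tuples in A^n_= differing only in the i-th coordinate on which f takes different values), then there exists a total function h : A^m → B such that f(a_1,...,a_n) = h(a_1,...,a_m) for all (a_1,...,a_n) in A^n_=. -/
/-- Variable `i` is essential in `f`. -/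
def EssAt {A B : Type*} {n : ℕ} (f : (Fin n → A) → B) (i : Fin n) : Prop :=
  ∃ a b : Fin n → A, (∀ j, j ≠ i → a j = b j) ∧ f a ≠ f b

/-- The essential arity of `f`: the number of essential variables. -/
noncomputable def essArity {A B : Type*} {n : ℕ} (f : (Fin n → A) → B) : ℕ :=
  Set.ncard {i : Fin n | EssAt f i}

/-- `A^n_=`: tuples with at least two equal coordinates (all of `A` when `n = 1`). -/
def Aneq (A : Type*) (n : ℕ) : Set (Fin n → A) :=
  {a | n = 1 ∨ ∃ i j : Fin n, i ≠ j ∧ a i = a j}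

/-- Variable `i` is essential in the restriction of `f` to `S` (witnesses must lie in `S`). -/
def EssAtOn {A B : Type*} {n : ℕ} (f : (Fin n → A) → B) (S : Set (Fin n → A)) (i : Fin n) : Prop :=
  ∃ a b : Fin n → A, a ∈ S ∧ b ∈ S ∧ (∀ j, j ≠ i → a j = b j) ∧ f a ≠ f b

/-- Essential arity of the restriction of `f` to `S`. -/
noncomputable def essArityOn {A B : Type*} {n : ℕ} (f : (Fin n → A) → B)
    (S : Set (Fin n → A)) : ℕ :=
  Set.ncard {i : Fin n | EssAtOn f S i}

/-- `g` is a support of `f`: they agree on `A^n_=`. -/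
def IsSupport {A B : Type*} {n : ℕ} (f g : (Fin n → A) → B) : Prop :=
  ∀ a ∈ Aneq A n, g a = f a

/-- The quasi-arity of `f`: minimum essential arity of a support of `f`. -/
noncomputable def qarity {A B : Type*} {n : ℕ} (f : (Fin n → A) → B) : ℕ :=
  sInf {m | ∃ g : (Fin n → A) → B, IsSupport f g ∧ essArity g = m}

/-- The variable identification minor `f_{i ← j}`: substitute `x_j` for `x_i`. -/
def idMinor {A B : Type*} {n : ℕ} (f : (Fin n → A) → B) (i j : Fin n) :
    (Fin n → A) → B :=
  fun a => f (Function.update a i (a j))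

/-- The arity gap of `f`: minimum of `ess f - ess f_{i←j}` over pairs of distinct
essential variables. -/
noncomputable def arityGap {A B : Type*} {n : ℕ} (f : (Fin n → A) → B) : ℕ :=
  sInf {d | ∃ i j : Fin n, i ≠ j ∧ EssAt f i ∧ EssAt f j ∧
    d = essArity f - essArity (idMinor f i j)}

/-!
Let `K` be a set of coordinates outside of which `f` has no essential variable on `A^n_=`.
Changing one coordinate outside `K` without leaving `A^n_=` does not change `f`, so it
suffices to join two tuples of `A^n_=` that agree on `K` by such moves. With two free
coordinates `p ≠ q` and a third coordinate `r` (this is where `n ≠ 2` enters), any tuple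
moves to one with `x_p = x_q = x₀`, for a fixed `x₀ ∈ A`, via `x_p := x_r`, `x_q := x₀`,
`x_p := x₀`, each intermediate tuple having a repeated entry; after that the remaining free
coordinates can be set to `x₀` one at a time. With at most one free coordinate a single move
suffices.
-/

open Function

section

variable {A B : Type*} {n : ℕ} {f : (Fin n → A) → B}

lemma mem_aneq_of_apply_eq {a : Fin n → A} {i j : Fin n} (hij : i ≠ j) (h : a i = a j) :
    a ∈ Aneq A n :=
  Or.inr ⟨i, j, hij, h⟩

lemma apply_eq_of_not_essAtOn {S : Set (Fin n → A)} {i : Fin n} (hi : ¬ EssAtOn f S i)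
    {a b : Fin n → A} (ha : a ∈ S) (hb : b ∈ S) (hab : ∀ j, j ≠ i → a j = b j) :
    f a = f b :=
  by_contra fun hne => hi ⟨a, b, ha, hb, hab, hne⟩

lemma apply_update_eq_of_not_essAtOn {S : Set (Fin n → A)} {i : Fin n}
    (hi : ¬ EssAtOn f S i) {c : Fin n → A} {x : A} (hc : c ∈ S) (hu : update c i x ∈ S) :
    f (update c i x) = f c :=
  apply_eq_of_not_essAtOn hi hu hc fun _ hj => update_of_ne hj _ _

namespace Aneq

variable {K : Finset (Fin n)}

lemma apply_piecewise_const_eq (hK : ∀ i ∉ K, ¬ EssAtOn f (Aneq A n) i) {x₀ : A}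
    {d : Fin n → A} {p q : Fin n} (hpq : p ≠ q) (hp : d p = x₀) (hq : d q = x₀)
    (T : Finset (Fin n)) (hT : ∀ i ∈ T, i ∉ K) :
    f (T.piecewise (fun _ => x₀) d) = f d := by
  have hmem : ∀ T : Finset (Fin n), T.piecewise (fun _ => x₀) d ∈ Aneq A n := fun T =>
    mem_aneq_of_apply_eq hpq (by by_cases hpT : p ∈ T <;> by_cases hqT : q ∈ T <;> simp [*])
  induction T using Finset.induction_on with
  | empty => rw [Finset.piecewise_empty]
  | @insert i T hiT ih =>
    have hmem_insert := hmem (insert i T)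
    rw [Finset.piecewise_insert] at hmem_insert ⊢
    rw [apply_update_eq_of_not_essAtOn (hK i (hT i (Finset.mem_insert_self i T))) (hmem T)
      hmem_insert, ih fun j hj => hT j (Finset.mem_insert_of_mem hj)]

lemma apply_eq_apply_piecewise_compl (hK : ∀ i ∉ K, ¬ EssAtOn f (Aneq A n) i) (x₀ : A)
    {c : Fin n → A} (hc : c ∈ Aneq A n) {p q r : Fin n} (hpK : p ∉ K) (hqK : q ∉ K)
    (hpq : p ≠ q) (hrp : r ≠ p) (hrq : r ≠ q) :
    f c = f (Kᶜ.piecewise (fun _ => x₀) c) := by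
  set c₁ := update c p (c r)
  set c₂ := update c₁ q x₀
  set c₃ := update c₂ p x₀
  have hc₁ : c₁ ∈ Aneq A n := mem_aneq_of_apply_eq hrp.symm (by simp [c₁, hrp])
  have hc₂ : c₂ ∈ Aneq A n := mem_aneq_of_apply_eq hrp.symm (by simp [c₂, c₁, hrp, hpq, hrq])
  have hc₃p : c₃ p = x₀ := by simp [c₃]
  have hc₃q : c₃ q = x₀ := by simp [c₃, c₂, hpq.symm]
  have hc₃ : c₃ ∈ Aneq A n := mem_aneq_of_apply_eq hpq (hc₃p.trans hc₃q.symm)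
  have hnorm : Kᶜ.piecewise (fun _ => x₀) c₃ = Kᶜ.piecewise (fun _ => x₀) c := by
    funext j
    by_cases hjK : j ∈ K
    · have hjp : j ≠ p := fun h => hpK (h ▸ hjK)
      have hjq : j ≠ q := fun h => hqK (h ▸ hjK)
      simp [hjK, c₃, c₂, c₁, hjp, hjq]
    · simp [hjK]
  calc f c = f c₁ := (apply_update_eq_of_not_essAtOn (hK p hpK) hc hc₁).symm
    _ = f c₂ := (apply_update_eq_of_not_essAtOn (hK q hqK) hc₁ hc₂).symm
    _ = f c₃ := (apply_update_eq_of_not_essAtOn (hK p hpK) hc₂ hc₃).symm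
    _ = f (Kᶜ.piecewise (fun _ => x₀) c) := by
      rw [← hnorm, apply_piecewise_const_eq hK hpq hc₃p hc₃q _ fun i hi => by simpa using hi]

theorem apply_eq_of_eqOn (hn : n ≠ 2) (hK : ∀ i ∉ K, ¬ EssAtOn f (Aneq A n) i)
    {a b : Fin n → A} (ha : a ∈ Aneq A n) (hb : b ∈ Aneq A n) (hab : ∀ k ∈ K, a k = b k) :
    f a = f b := by
  by_cases hfree : ∃ p q, p ∉ K ∧ q ∉ K ∧ p ≠ q
  · obtain ⟨p, q, hpK, hqK, hpq⟩ := hfree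
    have hn3 : 2 < n := by
      have := Fintype.one_lt_card_iff.mpr ⟨p, q, hpq⟩
      rw [Fintype.card_fin] at this
      omega
    obtain ⟨r, hrp, hrq⟩ := Fin.exists_ne_and_ne_of_two_lt p q hn3
    rw [apply_eq_apply_piecewise_compl hK (a p) ha hpK hqK hpq hrp hrq,
      apply_eq_apply_piecewise_compl hK (a p) hb hpK hqK hpq hrp hrq]
    congr 1
    funext j
    by_cases hjK : j ∈ K <;> simp [hjK, hab]
  · push Not at hfree
    by_cases hi : ∃ i, i ∉ K
    · obtain ⟨i, hiK⟩ := hi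
      exact apply_eq_of_not_essAtOn (hK i hiK) ha hb fun j hji =>
        hab j (by_contra fun hjK => hji (hfree j i hjK hiK))
    · push Not at hi
      exact congrArg f (funext fun j => hab j (hi j))

end Aneq

end

theorem stmt0_general {A B : Type*} [Fintype A] (h2 : 2 ≤ Fintype.card A) {n m : ℕ}
    (hn2 : n ≠ 2) (hm : m ≤ n) (f : (Fin n → A) → B)
    (hess : ∀ i : Fin n, EssAtOn f (Aneq A n) i ↔ (i : ℕ) < m) :
    ∃ h : (Fin m → A) → B, ∀ a ∈ Aneq A n, f a = h (fun k => a (Fin.castLE hm k)) := by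
  obtain ⟨x₀⟩ : Nonempty A := Fintype.card_pos_iff.mp (by omega)
  let restrict : Aneq A n → Fin m → A := fun a k => a.1 (Fin.castLE hm k)
  have hfactors : (fun a : Aneq A n => f a).FactorsThrough restrict := fun a b hab =>
    Aneq.apply_eq_of_eqOn (K := Finset.univ.filter fun i => (i : ℕ) < m) hn2
      (fun i hi => by simpa [hess] using hi) a.2 b.2
      (fun k hk => congrFun hab ⟨k, by simpa using hk⟩)
  exact ⟨extend restrict (fun a => f a) fun _ => f fun _ => x₀,
    fun a ha => (hfactors.extend_apply _ ⟨a, ha⟩).symm⟩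

theorem stmt0 {A B : Type*} [Fintype A] (h2 : 2 ≤ Fintype.card A) {n m : ℕ}
    (hn : 0 < n) (hn2 : n ≠ 2) (hm : m ≤ n) (f : (Fin n → A) → B)
    (hess : ∀ i : Fin n, EssAtOn f (Aneq A n) i ↔ (i : ℕ) < m) :
    ∃ h : (Fin m → A) → B, ∀ a ∈ Aneq A n, f a = h (fun k => a (Fin.castLE hm k)) :=
  stmt0_general h2 hn2 hm f hess
end

section
/- For every function f : A^n → B with n ≠ 2 (A finite), the quasi-arity of f equals the essential arity of the restriction of f to A^n_=; that is, qa f = ess f|_{A^n_=}. -/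
section Aux
variable {A B : Type*} {n : ℕ}

lemma update_mem_Aneq (a : Fin n → A) {i j : Fin n} (hij : i ≠ j) :
    Function.update a i (a j) ∈ Aneq A n := by
  refine Or.inr ⟨i, j, hij, ?_⟩
  rw [Function.update_self, Function.update_of_ne (Ne.symm hij)]

lemma ge_dir (f : (Fin n → A) → B) : essArityOn f (Aneq A n) ≤ qarity f := by
  have hne : {m | ∃ g : (Fin n → A) → B, IsSupport f g ∧ essArity g = m}.Nonempty :=
    ⟨essArity f, f, fun a _ => rfl, rfl⟩
  apply le_csInf hne
  rintro m ⟨g, hg, rfl⟩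
  refine Set.ncard_le_ncard ?_ (Set.toFinite _)
  rintro i ⟨a, b, ha, hb, hab, hne⟩
  exact ⟨a, b, hab, by rw [hg a ha, hg b hb]; exact hne⟩

lemma key_indep (f : (Fin n → A) → B) {i₀ : Fin n} (h : ¬ EssAtOn f (Aneq A n) i₀)
    {j k : Fin n} (hj : j ≠ i₀) (hk : k ≠ i₀) (a : Fin n → A) :
    f (Function.update a i₀ (a j)) = f (Function.update a i₀ (a k)) := by
  by_contra hne
  refine h ⟨_, _, update_mem_Aneq a (Ne.symm hj), update_mem_Aneq a (Ne.symm hk),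
    fun l hl => ?_, hne⟩
  rw [Function.update_of_ne hl, Function.update_of_ne hl]

lemma qarity_le_essArity (f : (Fin n → A) → B) : qarity f ≤ essArity f :=
  Nat.sInf_le ⟨f, fun a _ => rfl, rfl⟩

end Aux

theorem stmt3 {A B : Type*} [Fintype A] {n : ℕ} (hn : 0 < n) (hn2 : n ≠ 2)
    (f : (Fin n → A) → B) :
    qarity f = essArityOn f (Aneq A n) := by
  refine le_antisymm ?_ (ge_dir f)
  by_cases h1 : n = 1
  · subst h1
    have heq : essArityOn f (Aneq A 1) = essArity f := by
      unfold essArityOn essArity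
      congr 1; ext i
      constructor
      · rintro ⟨a, b, _, _, hab, hne⟩; exact ⟨a, b, hab, hne⟩
      · rintro ⟨a, b, hab, hne⟩; exact ⟨a, b, Or.inl rfl, Or.inl rfl, hab, hne⟩
    rw [heq]; exact qarity_le_essArity f
  · have hn3 : 3 ≤ n := by omega
    by_cases hex : ∃ i, ¬ EssAtOn f (Aneq A n) i
    · obtain ⟨i₀, hi₀⟩ := hex
      obtain ⟨j₀, hj₀⟩ : ∃ j₀ : Fin n, j₀ ≠ i₀ := by
        have : 1 < Fintype.card (Fin n) := by simp; omega
        exact Fintype.exists_ne_of_one_lt_card this i₀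
      set g := idMinor f i₀ j₀ with hg
      have hsupp : IsSupport f g := by
        intro a ha
        by_contra hne
        exact hi₀ ⟨_, a, update_mem_Aneq a (Ne.symm hj₀), ha,
          fun l hl => Function.update_of_ne hl _ _, hne⟩
      have hsub : {i : Fin n | EssAt g i} ⊆ {i | EssAtOn f (Aneq A n) i} := by
        rintro i ⟨a, b, hab, hne⟩
        have hii : i ≠ i₀ := by
          rintro rfl
          apply hne
          have hupd : Function.update a i (a j₀) = Function.update b i (b j₀) := by
            funext l
            by_cases hl : l = i
            · subst hl
              rw [Function.update_self, Function.update_self]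
              exact hab j₀ hj₀
            · rw [Function.update_of_ne hl, Function.update_of_ne hl]
              exact hab l hl
          simpa [hg, idMinor] using congrArg f hupd
        obtain ⟨k, hk0, hki⟩ : ∃ k : Fin n, k ≠ i₀ ∧ k ≠ i := by
          have hcard : (({i₀, i} : Finset (Fin n))ᶜ).Nonempty := by
            rw [← Finset.card_pos, Finset.card_compl]
            have h2 : ({i₀, i} : Finset (Fin n)).card ≤ 2 := Finset.card_le_two ..
            simp only [Fintype.card_fin]
            omega
          obtain ⟨k, hk⟩ := hcard
          simp only [Finset.mem_compl, Finset.mem_insert, Finset.mem_singleton, not_or] at hk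
          exact ⟨k, hk.1, hk.2⟩
        refine ⟨Function.update a i₀ (a k), Function.update b i₀ (b k),
          update_mem_Aneq a (Ne.symm hk0), update_mem_Aneq b (Ne.symm hk0), ?_, ?_⟩
        · intro l hl
          by_cases hl0 : l = i₀
          · subst hl0
            rw [Function.update_self, Function.update_self]
            exact hab k hki
          · rw [Function.update_of_ne hl0, Function.update_of_ne hl0]
            exact hab l hl
        · rw [← key_indep f hi₀ hj₀ hk0 a, ← key_indep f hi₀ hj₀ hk0 b]
          exact hne
      calc qarity f ≤ essArity g := Nat.sInf_le ⟨g, hsupp, rfl⟩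
        _ ≤ essArityOn f (Aneq A n) := Set.ncard_le_ncard hsub (Set.toFinite _)
    · push_neg at hex
      have heq : essArityOn f (Aneq A n) = n := by
        unfold essArityOn
        have h' : {i : Fin n | EssAtOn f (Aneq A n) i} = Set.univ := Set.eq_univ_of_forall hex
        rw [h', Set.ncard_univ]
        simp
      rw [heq]
      calc qarity f ≤ essArity f := qarity_le_essArity f
        _ ≤ n := le_trans (Set.ncard_le_ncard (Set.subset_univ _) (Set.toFinite _))
            (by rw [Set.ncard_univ]; simp)
end

section
/- (Świerczkowski's partition lemma) Fix n ≥ 3 and a finite set S. Suppose to every partition δ of S into at most n blocks is assigned a block φδ of δ, such that whenever δ refines δ' (each block of δ is contained in a block of δ'), the block φδ is contained in φδ'. Then the intersection of all the blocks φδ, over all partitions δ of S into at most n blocks, is nonempty. -/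
/-!
Call a partition admissible if it has at most `n` blocks. Choose an admissible partition `μ` whose
chosen block `φ μ` is as small as possible, and `x ∈ φ μ`. The two-block partition `{φ μ, (φ μ)ᶜ}`
coarsens `μ` and so also chooses `φ μ`; isolating `x` in it gives a partition with at most three
blocks (this is where `n ≥ 3` enters) whose chosen block lies in `φ μ`, hence equals `φ μ` by
minimality, and is the block `{x}`.

A block chosen by one partition is chosen by every admissible partition having it as a block:
compare both with their join. So `{x}` is chosen whenever it is a block. Given any admissible `δ`,
let `D` be the block of `x`; isolating `x` in `{D, Dᶜ}` chooses `{x}`, so `{D, Dᶜ}` chooses `D`, and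
so does its refinement `δ`.
-/

namespace Setoid

variable {α : Type*} {r s : Setoid α} {B C : Set α}

theorem nonempty_of_mem_classes (hB : B ∈ r.classes) : B.Nonempty :=
  Set.nonempty_iff_ne_empty.2 fun h => empty_notMem_classes (h ▸ hB)

theorem eq_of_subset_of_mem_classes (hB : B ∈ r.classes) (hC : C ∈ r.classes) (h : B ⊆ C) :
    B = C :=
  let ⟨_, hx⟩ := nonempty_of_mem_classes hB
  eq_of_mem_classes hB hx hC (h hx)

theorem ncard_classes_eq_natCard_quotient (r : Setoid α) :
    r.classes.ncard = Nat.card (Quotient r) := by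
  rw [← Nat.card_coe_set_eq, Nat.card_congr r.quotientEquivClasses]

theorem ncard_classes_antitone [Finite α] (h : r ≤ s) : s.classes.ncard ≤ r.classes.ncard := by
  simp only [ncard_classes_eq_natCard_quotient]
  exact Nat.card_le_card_of_surjective (Quotient.map' id h) (Quotient.ind fun a => ⟨⟦a⟧, rfl⟩)

theorem ncard_classes_ker_le {β : Type*} [Finite β] (f : α → β) :
    (ker f).classes.ncard ≤ Nat.card β := by
  rw [ncard_classes_eq_natCard_quotient, Nat.card_congr (quotientKerEquivRange f)]
  exact Finite.card_subtype_le _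

theorem le_ker_mem_of_mem_classes (hB : B ∈ r.classes) : r ≤ ker (· ∈ B) := by
  obtain ⟨y, rfl⟩ := hB
  exact fun a b hab => propext ⟨fun ha => r.trans' (r.symm' hab) ha, fun hb => r.trans' hab hb⟩

theorem mem_classes_of_le_ker_mem (hB : B ∈ r.classes) (h : r ≤ s) (hs : s ≤ ker (· ∈ B)) :
    B ∈ s.classes := by
  obtain ⟨b, hb⟩ := nonempty_of_mem_classes hB
  refine ⟨b, Set.ext fun a => ⟨fun ha => h ?_, fun hab => (ker_def.1 (hs hab)).mpr hb⟩⟩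
  exact (rel_iff_exists_classes r).2 ⟨B, hB, ha, hb⟩

theorem mem_classes_sup (hr : B ∈ r.classes) (hs : B ∈ s.classes) : B ∈ (r ⊔ s).classes :=
  mem_classes_of_le_ker_mem hr le_sup_left
    (sup_le (le_ker_mem_of_mem_classes hr) (le_ker_mem_of_mem_classes hs))

theorem mem_classes_ker_mem (hB : B.Nonempty) : B ∈ (ker (· ∈ B)).classes := by
  obtain ⟨b, hb⟩ := hB
  exact ⟨b, Set.ext fun a => ⟨fun ha => propext (iff_of_true ha hb), fun hab => ker_def.1 hab ▸ hb⟩⟩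

theorem ncard_classes_ker_mem_le (B : Set α) : (ker (· ∈ B)).classes.ncard ≤ 2 :=
  (ncard_classes_ker_le _).trans (by simp)

open Classical in
/-- The partition `{{x}, B \ {x}, Bᶜ \ {x}}`, empty blocks omitted. -/
noncomputable def isolate (x : α) (B : Set α) : Setoid α :=
  ker fun a => if a = x then none else some (a ∈ B)

theorem ncard_classes_isolate_le (x : α) (B : Set α) : (isolate x B).classes.ncard ≤ 3 :=
  (ncard_classes_ker_le _).trans (by simp)

theorem isolate_rel {x a b : α} {B : Set α} :
    isolate x B a b ↔ (a = x ↔ b = x) ∧ (a ∈ B ↔ b ∈ B) := by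
  rw [isolate, ker_def]
  by_cases ha : a = x <;> by_cases hb : b = x <;> simp [ha, hb]

theorem isolate_le_ker_mem (x : α) (B : Set α) : isolate x B ≤ ker (· ∈ B) :=
  fun _ _ hab => propext (isolate_rel.1 hab).2

theorem singleton_mem_classes_isolate (x : α) (B : Set α) : {x} ∈ (isolate x B).classes :=
  ⟨x, Set.ext fun a => by simp +contextual [isolate_rel]⟩

end Setoid

structure IsMonotoneBlockChoice {S : Type*} (n : ℕ) (φ : Setoid S → Set S) : Prop where
  mem_classes : ∀ δ : Setoid S, δ.classes.ncard ≤ n → φ δ ∈ δ.classes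
  mono : ∀ δ δ' : Setoid S, δ.classes.ncard ≤ n → δ'.classes.ncard ≤ n → δ ≤ δ' → φ δ ⊆ φ δ'

namespace IsMonotoneBlockChoice

open Setoid

variable {S : Type*} {n : ℕ} {φ : Setoid S → Set S} {δ δ' μ : Setoid S} {D : Set S} {x : S}

theorem eq_iff_eq_of_le (hφ : IsMonotoneBlockChoice n φ) (hδ : δ.classes.ncard ≤ n)
    (hδ' : δ'.classes.ncard ≤ n) (h : δ ≤ δ') (hD : D ∈ δ.classes) (hD' : D ∈ δ'.classes) :
    φ δ = D ↔ φ δ' = D := by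
  have hsub := hφ.mono δ δ' hδ hδ' h
  constructor
  · rintro rfl
    exact (eq_of_subset_of_mem_classes hD' (hφ.mem_classes δ' hδ') hsub).symm
  · intro hD'eq
    exact eq_of_subset_of_mem_classes (hφ.mem_classes δ hδ) hD (hD'eq ▸ hsub)

theorem eq_of_eq_of_mem_classes [Finite S] (hφ : IsMonotoneBlockChoice n φ)
    (hδ : δ.classes.ncard ≤ n) (hδ' : δ'.classes.ncard ≤ n) (hD : D ∈ δ.classes)
    (hD' : D ∈ δ'.classes) (h : φ δ = D) : φ δ' = D := by
  have hsup : (δ ⊔ δ').classes.ncard ≤ n := (ncard_classes_antitone le_sup_left).trans hδ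
  have hDsup := mem_classes_sup hD hD'
  exact (hφ.eq_iff_eq_of_le hδ' hsup le_sup_right hD' hDsup).2
    ((hφ.eq_iff_eq_of_le hδ hsup le_sup_left hD hDsup).1 h)

theorem exists_eq_singleton [Finite S] (hφ : IsMonotoneBlockChoice n φ) (hn : 3 ≤ n) :
    ∃ μ : Setoid S, μ.classes.ncard ≤ n ∧ ∃ x, φ μ = {x} := by
  have hunit : (ker fun _ : S => ()).classes.ncard ≤ n :=
    (ncard_classes_ker_le _).trans (by rw [Nat.card_unique]; omega)
  obtain ⟨μ, hμ, hmin⟩ := (measure fun δ : Setoid S => (φ δ).ncard).wf.has_min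
    {δ | δ.classes.ncard ≤ n} ⟨_, hunit⟩
  have hμcls := hφ.mem_classes μ hμ
  obtain ⟨x, hx⟩ := nonempty_of_mem_classes hμcls
  have hν : (ker (· ∈ φ μ)).classes.ncard ≤ n := (ncard_classes_ker_mem_le _).trans (by omega)
  have hτ : (isolate x (φ μ)).classes.ncard ≤ n := (ncard_classes_isolate_le _ _).trans hn
  have hφν : φ (ker (· ∈ φ μ)) = φ μ :=
    (hφ.eq_iff_eq_of_le hμ hν (le_ker_mem_of_mem_classes hμcls) hμcls
      (mem_classes_ker_mem ⟨x, hx⟩)).1 rfl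
  have hτμ : φ (isolate x (φ μ)) = φ μ :=
    Set.eq_of_subset_of_ncard_le ((hφ.mono _ _ hτ hν (isolate_le_ker_mem _ _)).trans hφν.le)
      (not_lt.1 (hmin _ hτ))
  refine ⟨μ, hμ, x, hτμ ▸ ?_⟩
  exact eq_of_mem_classes (hφ.mem_classes _ hτ) (hτμ.symm ▸ hx)
    (singleton_mem_classes_isolate _ _) rfl

theorem mem_of_eq_singleton [Finite S] (hφ : IsMonotoneBlockChoice n φ) (hn : 3 ≤ n)
    (hμ : μ.classes.ncard ≤ n) (hx : φ μ = {x}) (hδ : δ.classes.ncard ≤ n) : x ∈ φ δ := by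
  set D := {a | δ a x}
  have hD : D ∈ δ.classes := Setoid.mem_classes δ x
  have hxD : x ∈ D := δ.refl' x
  have hν : (ker (· ∈ D)).classes.ncard ≤ n := (ncard_classes_ker_mem_le _).trans (by omega)
  have hτ : (isolate x D).classes.ncard ≤ n := (ncard_classes_isolate_le _ _).trans hn
  have hτx : φ (isolate x D) = {x} :=
    hφ.eq_of_eq_of_mem_classes hμ hτ (hx ▸ hφ.mem_classes μ hμ)
      (singleton_mem_classes_isolate _ _) hx
  have hνx : x ∈ φ (ker (· ∈ D)) :=
    hφ.mono _ _ hτ hν (isolate_le_ker_mem _ _) (hτx ▸ rfl)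
  have hDν := mem_classes_ker_mem ⟨x, hxD⟩
  have hνD : φ (ker (· ∈ D)) = D := eq_of_mem_classes (hφ.mem_classes _ hν) hνx hDν hxD
  rw [(hφ.eq_iff_eq_of_le hδ hν (le_ker_mem_of_mem_classes hD) hD hDν).2 hνD]
  exact hxD

end IsMonotoneBlockChoice

theorem stmt5 {S : Type*} [Fintype S] {n : ℕ} (hn : 3 ≤ n)
    (φ : Setoid S → Set S)
    (hblock : ∀ δ : Setoid S, Set.ncard δ.classes ≤ n → φ δ ∈ δ.classes)
    (hmono : ∀ δ δ' : Setoid S, Set.ncard δ.classes ≤ n → Set.ncard δ'.classes ≤ n →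
      δ ≤ δ' → φ δ ⊆ φ δ') :
    ∃ x : S, ∀ δ : Setoid S, Set.ncard δ.classes ≤ n → x ∈ φ δ := by
  have hφ : IsMonotoneBlockChoice n φ := ⟨hblock, hmono⟩
  obtain ⟨μ, hμ, x, hx⟩ := hφ.exists_eq_singleton hn
  exact ⟨x, fun δ hδ => hφ.mem_of_eq_singleton hn hμ hx hδ⟩
end

section
/- Let f : A^n → B with n ≥ 2 (A finite with at least 2 elements). All variable identification minors f_{i←j} (i ≠ j) of f are constant functions if and only if f is quasi-nullary, i.e., f agrees with some constant function on A^n_=. -/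
theorem stmt6 {A B : Type*} [Fintype A] (h2 : 2 ≤ Fintype.card A) {n : ℕ}
    (hn : 2 ≤ n) (f : (Fin n → A) → B) :
    (∀ i j : Fin n, i ≠ j → ∃ c : B, ∀ a, idMinor f i j a = c) ↔
      ∃ c : B, ∀ a ∈ Aneq A n, f a = c := by
  obtain ⟨a0⟩ : Nonempty A := Fintype.card_pos_iff.mp (by omega)
  constructor
  · intro h
    refine ⟨f (fun _ => a0), ?_⟩
    rintro a (h1 | ⟨i, j, hij, heq⟩)
    · omega
    obtain ⟨c, hc⟩ := h i j hij
    have h1 : f a = c := by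
      have := hc a
      rwa [idMinor, ← heq, Function.update_eq_self] at this
    have h2' : f (fun _ => a0) = c := by
      have := hc (fun _ => a0)
      rwa [idMinor, show Function.update (fun _ => a0) i ((fun _ : Fin n => a0) j)
        = fun _ => a0 from Function.update_eq_self i _] at this
    rw [h1, h2']
  · rintro ⟨c, hc⟩ i j hij
    refine ⟨c, fun a => hc _ (Or.inr ⟨i, j, hij, ?_⟩)⟩
    simp [Function.update_of_ne hij.symm]
end

section
/- Let f : A^n → B with n = 2 or n ≥ 4 (A finite with at least 2 elements). All variable identification minors f_{i←j} (i ≠ j) of f are essentially unary if and only if f is quasi-unary, i.e., there exists an essentially unary function g : A^n → B agreeing with f on A^n_=. -/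
private lemma not_essAt {A B : Type*} {n : ℕ} {F : (Fin n → A) → B} {i : Fin n}
    (h : ¬ EssAt F i) {a b : Fin n → A} (hab : ∀ j, j ≠ i → a j = b j) : F a = F b := by
  by_contra hne; exact h ⟨a, b, hab, hne⟩

private lemma dep_single {A B : Type*} {n : ℕ} {F : (Fin n → A) → B} {k : Fin n}
    (h : ∀ j, j ≠ k → ¬ EssAt F j) (a b : Fin n → A) (hk : a k = b k) : F a = F b := by
  classical
  suffices H : ∀ s : Finset (Fin n), ∀ a b : Fin n → A, a k = b k →
      (∀ j, j ∉ s → a j = b j) → F a = F b from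
    H Finset.univ a b hk (fun j hj => absurd (Finset.mem_univ j) hj)
  intro s
  induction s using Finset.induction_on with
  | empty =>
    intro a b _ h0
    exact congrArg F (funext fun j => h0 j (Finset.notMem_empty j))
  | @insert j s hjs ih =>
    intro a b hk hout
    have step : F a = F (Function.update a j (b j)) := by
      by_cases hjk : j = k
      · subst hjk
        rw [← hk, Function.update_eq_self]
      · exact not_essAt (h j hjk) (fun l hl => (Function.update_of_ne hl _ _).symm)
    rw [step]
    apply ih
    · by_cases hjk : j = k
      · subst hjk; simp [hk]
      · rw [Function.update_of_ne (Ne.symm hjk)]; exact hk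
    · intro l hls
      by_cases hlj : l = j
      · subst hlj; simp
      · rw [Function.update_of_ne hlj]
        exact hout l (fun hmem => ((Finset.mem_insert.mp hmem).elim hlj hls))

private lemma essArity_one {A B : Type*} {n : ℕ} {F : (Fin n → A) → B}
    (h1 : essArity F = 1) :
    ∃ k, (∀ a b : Fin n → A, a k = b k → F a = F b) ∧ EssAt F k := by
  have h1' : Set.ncard {i : Fin n | EssAt F i} = 1 := h1
  rw [Set.ncard_eq_one] at h1'
  obtain ⟨k, hk⟩ := h1'
  refine ⟨k, dep_single ?_, ?_⟩
  · intro j hj hEss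
    apply hj
    have hmem : j ∈ {i : Fin n | EssAt F i} := hEss
    rw [hk] at hmem
    exact hmem
  · have : k ∈ {i : Fin n | EssAt F i} := by rw [hk]; rfl
    exact this

private lemma essArity_comp {A B : Type*} {n : ℕ} (h : A → B) (k : Fin n)
    (hnc : ∃ x y, h x ≠ h y) :
    essArity (fun a : Fin n → A => h (a k)) = 1 := by
  obtain ⟨x, y, hxy⟩ := hnc
  have hset : {i : Fin n | EssAt (fun a : Fin n → A => h (a k)) i} = {k} := by
    ext i
    simp only [Set.mem_setOf_eq, Set.mem_singleton_iff]
    constructor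
    · rintro ⟨a, b, hab, hne⟩
      by_contra hik
      exact hne (congrArg h (hab k (fun e => hik e.symm)))
    · rintro rfl
      exact ⟨Function.update (fun _ => y) i x, fun _ => y,
        fun j hj => Function.update_of_ne hj _ _, by simpa using hxy⟩
  have : essArity (fun a : Fin n → A => h (a k)) = Set.ncard ({k} : Set (Fin n)) := by
    unfold essArity; rw [hset]
  rw [this, Set.ncard_singleton]

private lemma contraT {A B : Type*} {n : ℕ} {f : (Fin n → A) → B} {h : A → B}
    {i j s t p q : Fin n} (T : Fin n → Prop)
    (hrep1 : ∀ a : Fin n → A, a i = a j → f a = h (a p))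
    (hrep2 : ∀ a : Fin n → A, a s = a t → f a = h (a q))
    (hTq : T q) (hTp : ¬ T p) (hTij : T i ↔ T j) (hTst : T s ↔ T t)
    {x y : A} (hxy : h x ≠ h y) : False := by
  classical
  let c : Fin n → A := fun r => if T r then y else x
  have hcv : ∀ r r', (T r ↔ T r') → c r = c r' := by
    intro r r' hrr
    show (if T r then y else x) = (if T r' then y else x)
    by_cases hr : T r
    · rw [if_pos hr, if_pos (hrr.mp hr)]
    · rw [if_neg hr, if_neg (fun h' => hr (hrr.mpr h'))]
  have h1 : f c = h x := by
    rw [hrep1 c (hcv i j hTij)]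
    exact congrArg h (if_neg hTp)
  have h2 : f c = h y := by
    rw [hrep2 c (hcv s t hTst)]
    exact congrArg h (if_pos hTq)
  exact hxy (h1.symm.trans h2)

theorem stmt7 {A B : Type*} [Fintype A] (h2 : 2 ≤ Fintype.card A) {n : ℕ}
    (hn : n = 2 ∨ 4 ≤ n) (f : (Fin n → A) → B) :
    (∀ i j : Fin n, i ≠ j → essArity (idMinor f i j) = 1) ↔
      ∃ g : (Fin n → A) → B, IsSupport f g ∧ essArity g = 1 := by
  classical
  constructor
  · intro hyp
    set h : A → B := fun x => f (fun _ => x) with hh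
    have key : ∀ i j : Fin n, i ≠ j →
        ∃ m : Fin n, m ≠ i ∧ (∀ a : Fin n → A, a i = a j → f a = h (a m)) ∧
          ∃ u v : A, h u ≠ h v := by
      intro i j hij
      obtain ⟨k, hrep, hess⟩ := essArity_one (hyp i j hij)
      have hconst : ∀ c : A, idMinor f i j (fun _ => c) = h c := by
        intro c
        show f (Function.update (fun _ => c) i ((fun _ : Fin n => c) j)) = f (fun _ => c)
        exact congrArg f (Function.update_eq_self i fun _ => c)
      have hki : k ≠ i := by
        rintro rfl
        obtain ⟨u, v, huv, hne⟩ := hess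
        apply hne
        show f (Function.update u k (u j)) = f (Function.update v k (v j))
        have : Function.update u k (u j) = Function.update v k (v j) := by
          funext l
          by_cases hl : l = k
          · subst hl
            rw [Function.update_self, Function.update_self]
            exact huv j (Ne.symm hij)
          · rw [Function.update_of_ne hl, Function.update_of_ne hl]
            exact huv l hl
        exact congrArg f this
      refine ⟨k, hki, ?_, ?_⟩
      · intro a ha
        have h1 : f a = idMinor f i j a := by
          show f a = f (Function.update a i (a j))
          rw [← ha, Function.update_eq_self]
        rw [h1, hrep a (fun _ => a k) rfl, hconst]
      · obtain ⟨u, v, -, hne⟩ := hess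
        refine ⟨u k, v k, ?_⟩
        rw [← hconst (u k), ← hconst (v k),
            ← hrep u (fun _ => u k) rfl, ← hrep v (fun _ => v k) rfl]
        exact hne
    rcases hn with rfl | hn4
    · -- n = 2
      have h01 : (0 : Fin 2) ≠ 1 := by decide
      obtain ⟨m, hm0, hrep, x, y, hxy⟩ := key 0 1 h01
      refine ⟨fun a => h (a 0), ?_, essArity_comp h 0 ⟨x, y, hxy⟩⟩
      intro a ha
      have ha01 : a 0 = a 1 := by
        rcases ha with h1 | ⟨i, j, hij, hija⟩
        · exact absurd h1 (by norm_num)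
        · fin_cases i <;> fin_cases j <;> simp_all
      have hm1 : m = 1 := by
        fin_cases m <;> simp_all
      subst hm1
      have := hrep a ha01
      show h (a 0) = f a
      rw [this]
      exact congrArg h ha01
    · -- 4 ≤ n
      obtain ⟨p0, p1, p2, p3, h01, h02, h03, h12, h13, h23⟩ :
          ∃ p0 p1 p2 p3 : Fin n, p0 ≠ p1 ∧ p0 ≠ p2 ∧ p0 ≠ p3 ∧ p1 ≠ p2 ∧ p1 ≠ p3 ∧
            p2 ≠ p3 := by
        refine ⟨⟨0, by omega⟩, ⟨1, by omega⟩, ⟨2, by omega⟩, ⟨3, by omega⟩,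
          ?_, ?_, ?_, ?_, ?_, ?_⟩ <;>
          · intro hq
            have := congrArg Fin.val hq
            simp at this
      obtain ⟨-, -, -, x, y, hxy⟩ := key p0 p1 h01
      have dich : ∀ i j : Fin n, i ≠ j →
          (∀ a : Fin n → A, a i = a j → f a = h (a i)) ∨
          ∃ m : Fin n, m ≠ i ∧ m ≠ j ∧ ∀ a : Fin n → A, a i = a j → f a = h (a m) := by
        intro i j hij
        obtain ⟨m, hmi, hrep, -⟩ := key i j hij
        by_cases hmj : m = j
        · left
          intro a ha
          rw [hrep a ha, hmj, ← ha]
        · right; exact ⟨m, hmi, hmj, hrep⟩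
      obtain ⟨k, hk01, hk23⟩ :
          ∃ k : Fin n, (∀ a : Fin n → A, a p0 = a p1 → f a = h (a k)) ∧
            (∀ a : Fin n → A, a p2 = a p3 → f a = h (a k)) := by
        rcases dich p0 p1 h01 with hP | ⟨m, hm0, hm1, hO⟩
        · rcases dich p2 p3 h23 with hP' | ⟨m', hm2', hm3', hO'⟩
          · exact (contraT (fun r => r = p2 ∨ r = p3) hP hP' (Or.inl rfl)
              (fun e => e.elim h02 h03)
              (iff_of_false (fun e => e.elim h02 h03) (fun e => e.elim h12 h13))
              (iff_of_true (Or.inl rfl) (Or.inr rfl)) hxy).elim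
          · by_cases hc : m' = p0 ∨ m' = p1
            · refine ⟨m', ?_, hO'⟩
              intro a ha
              rcases hc with rfl | rfl
              · exact hP a ha
              · rw [hP a ha]; exact congrArg h ha
            · push_neg at hc
              exact (contraT (fun r => r = m') hP hO' rfl
                (fun e => hc.1 e.symm)
                (iff_of_false (fun e => hc.1 e.symm) (fun e => hc.2 e.symm))
                (iff_of_false (fun e => hm2' e.symm) (fun e => hm3' e.symm)) hxy).elim
        · rcases dich p2 p3 h23 with hP' | ⟨m', hm2', hm3', hO'⟩
          · by_cases hc : m = p2 ∨ m = p3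
            · refine ⟨m, hO, ?_⟩
              intro a ha
              rcases hc with rfl | rfl
              · exact hP' a ha
              · rw [hP' a ha]; exact congrArg h ha
            · push_neg at hc
              exact (contraT (fun r => r = m) hP' hO rfl
                (fun e => hc.1 e.symm)
                (iff_of_false (fun e => hc.1 e.symm) (fun e => hc.2 e.symm))
                (iff_of_false (fun e => hm0 e.symm) (fun e => hm1 e.symm)) hxy).elim
          · by_cases hmm : m = m'
            · subst hmm; exact ⟨m, hO, hO'⟩
            · by_cases hc : m = p2 ∨ m = p3
              · exact (contraT (fun r => r = p2 ∨ r = p3) hO' hO hc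
                  (fun e => e.elim hm2' hm3')
                  (iff_of_true (Or.inl rfl) (Or.inr rfl))
                  (iff_of_false (fun e => e.elim h02 h03) (fun e => e.elim h12 h13))
                  hxy).elim
              · push_neg at hc
                exact (contraT (fun r => r = m) hO' hO rfl
                  (fun e => hmm e.symm)
                  (iff_of_false (fun e => hc.1 e.symm) (fun e => hc.2 e.symm))
                  (iff_of_false (fun e => hm0 e.symm) (fun e => hm1 e.symm)) hxy).elim
      have repAll : ∀ i j : Fin n, i ≠ j → ∀ a : Fin n → A, a i = a j → f a = h (a k) := by
        intro i j hij
        rcases dich i j hij with hP | ⟨m, hmi, hmj, hO⟩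
        · by_cases hki : k = i
          · subst hki; exact hP
          · by_cases hkj : k = j
            · subst hkj
              intro a ha
              rw [hP a ha]
              exact congrArg h ha
            · obtain ⟨s, t, hst, hks, hkt, hrepst⟩ :
                  ∃ s t : Fin n, s ≠ t ∧ k ≠ s ∧ k ≠ t ∧
                    ∀ a : Fin n → A, a s = a t → f a = h (a k) := by
                by_cases hk2 : k = p2 ∨ k = p3
                · exact ⟨p0, p1, h01,
                    (by rcases hk2 with rfl | rfl; exacts [Ne.symm h02, Ne.symm h03]),
                    (by rcases hk2 with rfl | rfl; exacts [Ne.symm h12, Ne.symm h13]), hk01⟩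
                · push_neg at hk2
                  exact ⟨p2, p3, h23, hk2.1, hk2.2, hk23⟩
              exact ((contraT (fun r => r = k) hP hrepst rfl (fun e => hki e.symm)
                (iff_of_false (fun e => hki e.symm) (fun e => hkj e.symm))
                (iff_of_false (fun e => hks e.symm) (fun e => hkt e.symm)) hxy)).elim
        · by_cases hmk : m = k
          · subst hmk; exact hO
          · obtain ⟨s, t, hst, hms, hmt, hrepst⟩ :
                ∃ s t : Fin n, s ≠ t ∧ m ≠ s ∧ m ≠ t ∧
                  ∀ a : Fin n → A, a s = a t → f a = h (a k) := by
              by_cases hm2 : m = p0 ∨ m = p1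
              · exact ⟨p2, p3, h23,
                  (by rcases hm2 with rfl | rfl; exacts [h02, h12]),
                  (by rcases hm2 with rfl | rfl; exacts [h03, h13]), hk23⟩
              · push_neg at hm2
                exact ⟨p0, p1, h01, hm2.1, hm2.2, hk01⟩
            by_cases hk4 : k = i ∨ k = j ∨ k = s ∨ k = t
            · exact (contraT (fun r => r = i ∨ r = j ∨ r = s ∨ r = t) hO hrepst hk4
                (fun e => e.elim hmi (fun e' => e'.elim hmj (fun e'' => e''.elim hms hmt)))
                (iff_of_true (Or.inl rfl) (Or.inr (Or.inl rfl)))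
                (iff_of_true (Or.inr (Or.inr (Or.inl rfl))) (Or.inr (Or.inr (Or.inr rfl))))
                hxy).elim
            · push_neg at hk4
              exact (contraT (fun r => r = k) hO hrepst rfl (fun e => hmk e)
                (iff_of_false (fun e => hk4.1 e.symm) (fun e => hk4.2.1 e.symm))
                (iff_of_false (fun e => hk4.2.2.1 e.symm) (fun e => hk4.2.2.2 e.symm))
                hxy).elim
      refine ⟨fun a => h (a k), ?_, essArity_comp h k ⟨x, y, hxy⟩⟩
      intro a ha
      rcases ha with h1 | ⟨i, j, hij, hija⟩
      · exact absurd h1 (by omega)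
      · exact (repAll i j hij a hija).symm
  · rintro ⟨g, hsupp, hg1⟩ i j hij
    obtain ⟨k, hrep, hess⟩ := essArity_one hg1
    have hfg : ∀ a : Fin n → A, idMinor f i j a = idMinor g i j a := by
      intro a
      have hmem : Function.update a i (a j) ∈ Aneq A n :=
        Or.inr ⟨i, j, hij, by
          rw [Function.update_self, Function.update_of_ne (Ne.symm hij)]⟩
      exact (hsupp _ hmem).symm
    have hH : ∀ a : Fin n → A,
        idMinor g i j a = g (fun _ => a (if k = i then j else k)) := by
      intro a
      apply hrep
      show Function.update a i (a j) k = a (if k = i then j else k)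
      by_cases hk : k = i
      · subst hk; rw [Function.update_self, if_pos rfl]
      · rw [Function.update_of_ne hk, if_neg hk]
    have hnc : ∃ u v : A, g (fun _ => u) ≠ g (fun _ => v) := by
      obtain ⟨u, v, -, hne⟩ := hess
      exact ⟨u k, v k, fun e => hne ((hrep u (fun _ => u k) rfl).trans
        (e.trans (hrep v (fun _ => v k) rfl).symm))⟩
    have heq : idMinor f i j
        = fun a : Fin n → A => (fun x => g (fun _ => x)) (a (if k = i then j else k)) :=
      funext fun a => (hfg a).trans (hH a)
    rw [heq]
    exact essArity_comp _ _ hnc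
end

section
/- (Świerczkowski's lemma) Let f be an n-ary operation on a finite set A with n ≥ 4. Then f is a semiprojection (there is t such that f(a_1,...,a_n) = a_t whenever a_i = a_j for some i ≠ j) if and only if every variable identification minor f_{i←j} (i ≠ j) of f is a projection. -/
private lemma exists_fourth {n : ℕ} (hn : 4 ≤ n) (a b c : Fin n) :
    ∃ l : Fin n, l ≠ a ∧ l ≠ b ∧ l ≠ c := by
  by_contra h
  push_neg at h
  have hsub : (Finset.univ : Finset (Fin n)) ⊆ {a, b, c} := by
    intro l _
    simp only [Finset.mem_insert, Finset.mem_singleton]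
    by_cases h1 : l = a
    · exact Or.inl h1
    by_cases h2 : l = b
    · exact Or.inr (Or.inl h2)
    exact Or.inr (Or.inr (h l h1 h2))
  have h1 : n ≤ ({a, b, c} : Finset (Fin n)).card := by
    have := Finset.card_le_card hsub
    simpa using this
  have h2 : ({a, b, c} : Finset (Fin n)).card ≤ 3 := by
    have ha := Finset.card_insert_le a ({b, c} : Finset (Fin n))
    have hb := Finset.card_insert_le b ({c} : Finset (Fin n))
    simp only [Finset.card_singleton] at *
    omega
  omega

private lemma key {A : Type*} {n : ℕ} (f : (Fin n → A) → A)
    (x y : A) (hxy : x ≠ y) (hn : 4 ≤ n)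
    (W : ∀ i j : Fin n, i ≠ j → ∃ t, t ≠ i ∧ ∀ a : Fin n → A, a i = a j → f a = a t) :
    ∃ t : Fin n, ∀ i j : Fin n, i ≠ j → ∀ a : Fin n → A, a i = a j → f a = a t := by
  classical
  have sep : ∀ (t i j s p q : Fin n),
      (∀ a : Fin n → A, a i = a j → f a = a t) →
      (∀ a : Fin n → A, a p = a q → f a = a s) →
      ∀ a : Fin n → A, a i = a j → a p = a q → a t = a s := by
    intro t i j s p q h1 h2 a hij hpq
    rw [← h1 a hij, h2 a hpq]
  -- Step 1: find an "external" pair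
  obtain ⟨i, j, k, hij, hki, hkj, hk⟩ :
      ∃ i j k : Fin n, i ≠ j ∧ k ≠ i ∧ k ≠ j ∧ ∀ a : Fin n → A, a i = a j → f a = a k := by
    have h0 : (0 : ℕ) < n := by omega
    have h1 : (1 : ℕ) < n := by omega
    have h2' : (2 : ℕ) < n := by omega
    have h3 : (3 : ℕ) < n := by omega
    set i0 : Fin n := ⟨0, h0⟩ with hi0
    set i1 : Fin n := ⟨1, h1⟩ with hi1
    set i2 : Fin n := ⟨2, h2'⟩ with hi2
    set i3 : Fin n := ⟨3, h3⟩ with hi3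
    have h01 : i0 ≠ i1 := Fin.ne_of_val_ne (by norm_num)
    have h23 : i2 ≠ i3 := Fin.ne_of_val_ne (by norm_num)
    have h20 : i2 ≠ i0 := Fin.ne_of_val_ne (by norm_num)
    have h21 : i2 ≠ i1 := Fin.ne_of_val_ne (by norm_num)
    have h30 : i3 ≠ i0 := Fin.ne_of_val_ne (by norm_num)
    have h31 : i3 ≠ i1 := Fin.ne_of_val_ne (by norm_num)
    obtain ⟨t, ht0, hw⟩ := W i0 i1 h01
    by_cases h : t = i1
    · subst h
      obtain ⟨s, hs2, hw'⟩ := W i2 i3 h23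
      by_cases h' : s = i3
      · subst h'
        exfalso
        have := sep _ _ _ _ _ _ hw hw'
          (fun v => if v = i0 ∨ v = i1 then x else y)
          (by simp) (by simp [h20, h21, h30, h31])
        simp [h30, h31] at this
        exact hxy this
      · exact ⟨i2, i3, s, h23, hs2, h', hw'⟩
    · exact ⟨i0, i1, t, h01, ht0, h, hw⟩
  -- Step 2: k works for every pair
  refine ⟨k, ?_⟩
  intro p q hpq
  obtain ⟨s, hsp, hs⟩ := W p q hpq
  by_cases hsk : s = k
  · exact hsk ▸ hs
  by_cases hkpq : k = p ∨ k = q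
  · by_cases hsq : s = q
    · subst hsq
      intro a hapq
      rcases hkpq with h | h
      · rw [hs a hapq, ← hapq, h]
      · rw [hs a hapq, h]
    · by_cases hsij : s = i ∨ s = j
      · -- the hard case: derive a contradiction
        exfalso
        obtain ⟨m, hm1, hmk, hms⟩ :
            ∃ m : Fin n, (∀ a : Fin n → A, a k = a m → f a = a s) ∧ m ≠ k ∧ m ≠ s := by
          rcases hkpq with h | h
          · subst h
            exact ⟨q, fun a hh => hs a hh, fun hh => hpq hh.symm, fun hh => hsq hh.symm⟩
          · subst h
            exact ⟨p, fun a hh => hs a hh.symm, hpq, fun hh => hsp hh.symm⟩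
        have hks : k ≠ s := fun hh => hsk hh.symm
        -- m ∈ {i, j}
        have hmij : m = i ∨ m = j := by
          by_contra hm
          push_neg at hm
          have := sep _ _ _ _ _ _ hk hm1
            (fun v => if v = i ∨ v = j then x else y)
            (by simp) (by simp [hki, hkj, hm.1, hm.2])
          rcases hsij with h | h <;> subst h <;> simp [hki, hkj] at this <;>
            exact hxy this.symm
        -- hence {i,j} = {s,m}; k works on the pair (s,m)
        have hksm : ∀ a : Fin n → A, a s = a m → f a = a k := by
          rcases hsij with h | h <;> rcases hmij with h' | h'
          · exact absurd (h'.trans h.symm) hms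
          · subst h; subst h'; exact hk
          · subst h; subst h'; exact fun a hh => hk a hh.symm
          · exact absurd (h'.trans h.symm) hms
        have hkm : k ≠ m := fun hh => hmk hh.symm
        obtain ⟨w, hwk, hws, hwm⟩ := exists_fourth hn k s m
        obtain ⟨u, hus, hu⟩ := W s w (fun hh => hws hh.symm)
        have huw : u = w := by
          by_contra huw
          have := sep _ _ _ _ _ _ hm1 hu
            (fun v => if v = s ∨ v = w then x else y)
            (by simp [hks, hms, Ne.symm hwk, Ne.symm hwm])
            (by simp)
          simp [hus, huw] at this
          exact hxy this
        subst huw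
        have hss : ∀ a : Fin n → A, a s = a u → f a = a s :=
          fun a hh => (hu a hh).trans hh.symm
        have := sep _ _ _ _ _ _ hksm hss
          (fun v => if v = k then x else y)
          (by simp [Ne.symm hks, hmk]) (by simp [Ne.symm hks, hwk])
        simp [Ne.symm hks] at this
        exact hxy this
      · -- s ∉ {i,j}: contradiction
        exfalso
        push_neg at hsij
        have := sep _ _ _ _ _ _ hk hs
          (fun v => if v = s then x else y)
          (by simp [Ne.symm hsij.1, Ne.symm hsij.2])
          (by
            have hqs : q ≠ s := fun hh => hsq hh.symm
            simp [Ne.symm hsp, hqs])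
        have hks : k ≠ s := fun hh => hsk hh.symm
        simp [hks] at this
        exact hxy this.symm
  · -- k ∉ {p,q}: contradiction
    exfalso
    push_neg at hkpq
    have := sep _ _ _ _ _ _ hk hs
      (fun v => if v = k then x else y)
      (by simp [Ne.symm hki, Ne.symm hkj]) (by simp [Ne.symm hkpq.1, Ne.symm hkpq.2])
    simp [hsk] at this
    exact hxy this

theorem stmt8 {A : Type*} [Fintype A] (h2 : 2 ≤ Fintype.card A) {n : ℕ}
    (hn : 4 ≤ n) (f : (Fin n → A) → A) :
    (∃ t : Fin n, ∀ a ∈ Aneq A n, f a = a t) ↔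
      (∀ i j : Fin n, i ≠ j → ∃ t : Fin n, ∀ a, idMinor f i j a = a t) := by
  classical
  obtain ⟨x, y, hxy⟩ : ∃ x y : A, x ≠ y := by
    have h1 : 1 < Fintype.card A := by omega
    have : Nontrivial A := Fintype.one_lt_card_iff_nontrivial.mp h1
    exact exists_pair_ne A
  constructor
  · rintro ⟨t, ht⟩ i j hij
    refine ⟨if t = i then j else t, fun a => ?_⟩
    have hmem : Function.update a i (a j) ∈ Aneq A n :=
      Or.inr ⟨i, j, hij, by
        rw [Function.update_self, Function.update_of_ne (Ne.symm hij)]⟩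
    rw [idMinor]
    rw [ht _ hmem]
    by_cases h : t = i
    · subst h
      simp
    · simp [h, Function.update_of_ne h]
  · intro H
    have W : ∀ i j : Fin n, i ≠ j →
        ∃ t, t ≠ i ∧ ∀ a : Fin n → A, a i = a j → f a = a t := by
      intro i j hij
      obtain ⟨t, ht⟩ := H i j hij
      refine ⟨t, ?_, ?_⟩
      · rintro rfl
        have e1 : Function.update (fun _ : Fin n => x) t
            ((fun _ : Fin n => x) j) = fun _ => x := by
          funext v
          simp [Function.update_apply]
        have e2 : Function.update (Function.update (fun _ : Fin n => x) t y) t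
            ((Function.update (fun _ : Fin n => x) t y) j) = fun _ => x := by
          funext v
          by_cases hv : v = t
          · simp [hv, Function.update_apply, Ne.symm hij]
          · simp [hv, Function.update_apply]
        have h1 := ht (fun _ => x)
        have h2 := ht (Function.update (fun _ : Fin n => x) t y)
        rw [idMinor] at h1 h2
        rw [e1] at h1
        rw [e2] at h2
        rw [h1] at h2
        simp [Function.update_apply] at h2
        exact hxy h2
      · intro a hija
        have h := ht a
        rw [idMinor] at h
        rwa [show Function.update a i (a j) = a by
          rw [← hija, Function.update_eq_self]] at h
    obtain ⟨t, ht⟩ := key f x y hxy hn W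
    refine ⟨t, fun a ha => ?_⟩
    rcases ha with h1 | ⟨i, j, hij, hija⟩
    · omega
    · exact ht i j hij a hija
end

section
/- Suppose f : A^n → B depends on all of its n variables, where 2 ≤ n ≤ |A|. If the quasi-arity of f is m < n, then the arity gap of f equals n − m. -/
open Function

section EssentialVariables

variable {A B : Type*} {n : ℕ}

theorem essAt_iff_exists_update {g : (Fin n → A) → B} {i : Fin n} :
    EssAt g i ↔ ∃ a x, g (update a i x) ≠ g a := by
  constructor
  · rintro ⟨a, b, hab, hne⟩
    refine ⟨a, b i, fun h => hne ?_⟩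
    convert h.symm using 2
    funext l
    by_cases hl : l = i
    · subst hl; simp
    · simp [hl, hab l hl]
  · rintro ⟨a, x, hne⟩
    exact ⟨update a i x, a, fun l hl => update_of_ne hl _ _, hne⟩

theorem essArity_eq_of_forall_essAt {g : (Fin n → A) → B} (h : ∀ i, EssAt g i) :
    essArity g = n := by
  simp [essArity, h]

theorem exists_not_essAt_of_essArity_lt {g : (Fin n → A) → B} (h : essArity g < n) :
    ∃ i, ¬ EssAt g i := by
  by_contra! hall
  exact h.ne (essArity_eq_of_forall_essAt hall)

end EssentialVariables

section IdentificationMinors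

variable {A B : Type*} {n : ℕ} {g : (Fin n → A) → B} {i j k : Fin n}

theorem update_self_apply_mem_Aneq (a : Fin n → A) (hij : i ≠ j) :
    update a i (a j) ∈ Aneq A n :=
  Or.inr ⟨i, j, hij, by simp [update_of_ne hij.symm]⟩

theorem IsSupport.idMinor_eq {f : (Fin n → A) → B} (hs : IsSupport f g) (hij : i ≠ j) :
    idMinor f i j = idMinor g i j :=
  funext fun a => (hs _ (update_self_apply_mem_Aneq a hij)).symm

theorem idMinor_eq_self_of_not_essAt (hi : ¬ EssAt g i) (j : Fin n) : idMinor g i j = g := by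
  funext a
  simp only [essAt_iff_exists_update, not_exists, not_not] at hi
  exact hi a (a j)

theorem not_essAt_idMinor_left (hij : i ≠ j) : ¬ EssAt (idMinor g i j) i := by
  rw [essAt_iff_exists_update]
  rintro ⟨a, x, hne⟩
  exact hne (by simp [idMinor, update_of_ne hij.symm])

theorem essAt_of_essAt_idMinor (hki : k ≠ i) (hkj : k ≠ j) (hk : EssAt (idMinor g i j) k) :
    EssAt g k := by
  rw [essAt_iff_exists_update] at hk ⊢
  obtain ⟨a, x, hne⟩ := hk
  refine ⟨update a i (a j), x, ?_⟩
  simpa [idMinor, update_of_ne hkj.symm, update_comm hki] using hne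

/-- Changing `x_j` in `g_{i←j}` changes both `x_i` and `x_j` in `g`; one of the two steps
must change the value. -/
theorem essAt_or_essAt_of_essAt_idMinor_right (hij : i ≠ j) (hj : EssAt (idMinor g i j) j) :
    EssAt g j ∨ EssAt g i := by
  rw [essAt_iff_exists_update] at hj
  obtain ⟨a, x, hne⟩ := hj
  set c := update a i (a j)
  by_cases hstep : g (update c j x) = g c
  · refine Or.inr (essAt_iff_exists_update.2 ⟨update c j x, x, ?_⟩)
    rw [hstep]
    simpa [idMinor, c, update_comm hij] using hne
  · exact Or.inl (essAt_iff_exists_update.2 ⟨c, x, hstep⟩)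

theorem essArity_idMinor_le (hij : i ≠ j) : essArity (idMinor g i j) ≤ essArity g := by
  have hmem : ∀ k, EssAt (idMinor g i j) k →
      k ≠ i ∧ (EssAt g k ∨ k = j ∧ EssAt g i) := by
    intro k hk
    have hki : k ≠ i := fun h => not_essAt_idMinor_left hij (h ▸ hk)
    by_cases hkj : k = j
    · subst hkj
      exact ⟨hki, (essAt_or_essAt_of_essAt_idMinor_right hij hk).imp_right (⟨rfl, ·⟩)⟩
    · exact ⟨hki, Or.inl (essAt_of_essAt_idMinor hki hkj hk)⟩
  by_cases hi : EssAt g i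
  · calc essArity (idMinor g i j)
        ≤ (insert j ({k | EssAt g k} \ {i})).ncard := by
          refine Set.ncard_le_ncard fun k hk => ?_
          obtain ⟨hki, hk | ⟨rfl, -⟩⟩ := hmem k hk
          · exact Or.inr ⟨hk, hki⟩
          · exact Or.inl rfl
      _ ≤ ({k | EssAt g k} \ {i}).ncard + 1 := Set.ncard_insert_le _ _
      _ = essArity g := Set.ncard_sdiff_singleton_add_one hi
  · refine Set.ncard_le_ncard fun k hk => ?_
    obtain ⟨-, hk | ⟨-, hgi⟩⟩ := hmem k hk
    · exact hk
    · exact absurd hgi hi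

end IdentificationMinors

section QuasiArity

variable {A B : Type*} {n : ℕ}

theorem exists_isSupport_essArity_eq_qarity (f : (Fin n → A) → B) :
    ∃ g, IsSupport f g ∧ essArity g = qarity f :=
  Nat.sInf_mem (s := {m | ∃ g, IsSupport f g ∧ essArity g = m})
    ⟨essArity f, f, fun _ _ => rfl, rfl⟩

theorem essArity_idMinor_le_qarity (f : (Fin n → A) → B) {i j : Fin n} (hij : i ≠ j) :
    essArity (idMinor f i j) ≤ qarity f := by
  obtain ⟨g, hsupp, hg⟩ := exists_isSupport_essArity_eq_qarity f
  rw [hsupp.idMinor_eq hij, ← hg]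
  exact essArity_idMinor_le hij

theorem exists_essArity_idMinor_eq_qarity {f : (Fin n → A) → B} (hn : 2 ≤ n)
    (hq : qarity f < n) : ∃ i j, i ≠ j ∧ essArity (idMinor f i j) = qarity f := by
  obtain ⟨g, hsupp, hg⟩ := exists_isSupport_essArity_eq_qarity f
  obtain ⟨i, hi⟩ := exists_not_essAt_of_essArity_lt (hg ▸ hq)
  obtain ⟨j, hji⟩ := Fintype.exists_ne_of_one_lt_card (by simpa using one_lt_two.trans_le hn) i
  refine ⟨i, j, hji.symm, ?_⟩
  rw [hsupp.idMinor_eq hji.symm, idMinor_eq_self_of_not_essAt hi, hg]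

end QuasiArity

theorem stmt9_general {A B : Type*} {n m : ℕ} (hn2 : 2 ≤ n)
    (f : (Fin n → A) → B)
    (hdep : ∀ i : Fin n, EssAt f i) (hm : m < n) (hq : qarity f = m) :
    arityGap f = n - m := by
  subst hq
  have hess : essArity f = n := essArity_eq_of_forall_essAt hdep
  obtain ⟨i, j, hij, hmin⟩ := exists_essArity_idMinor_eq_qarity hn2 hm
  have hwitness : n - qarity f ∈ {d | ∃ i j : Fin n, i ≠ j ∧ EssAt f i ∧ EssAt f j ∧
      d = essArity f - essArity (idMinor f i j)} :=
    ⟨i, j, hij, hdep i, hdep j, by rw [hess, hmin]⟩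
  refine le_antisymm (Nat.sInf_le hwitness) (le_csInf ⟨_, hwitness⟩ ?_)
  rintro d ⟨i', j', hij', -, -, rfl⟩
  have := essArity_idMinor_le_qarity f hij'
  omega

theorem stmt9 {A B : Type*} [Fintype A] {n m : ℕ} (hn2 : 2 ≤ n)
    (hnk : n ≤ Fintype.card A) (f : (Fin n → A) → B)
    (hdep : ∀ i : Fin n, EssAt f i) (hm : m < n) (hq : qarity f = m) :
    arityGap f = n - m :=
  stmt9_general hn2 f hdep hm hq
end

section
/- Suppose f : A^n → B depends on all of its n variables, n > 3, and the quasi-arity of f equals n (i.e., every function agreeing with f on tuples with a repeated coordinate depends on all n variables). Then the arity gap of f is at most 2. -/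
/- ### Auxiliary machinery -/

section Aux

variable {A B : Type*} {n : ℕ}

/-- `t` is essential within the hyperplane `{a | a i = a j}`. -/
def REss (f : (Fin n → A) → B) (i j t : Fin n) : Prop :=
  ∃ a b : Fin n → A, a i = a j ∧ b i = b j ∧ (∀ m, m ≠ t → a m = b m) ∧ f a ≠ f b

/-- The diagonal direction of the hyperplane `{a | a i = a j}` is essential. -/
def DEss (f : (Fin n → A) → B) (i j : Fin n) : Prop :=
  ∃ a b : Fin n → A, a i = a j ∧ b i = b j ∧ (∀ m, m ≠ i → m ≠ j → a m = b m) ∧ f a ≠ f b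

/-- `t` has a witness lying inside some hyperplane avoiding `t`. -/
def T1 (f : (Fin n → A) → B) (t : Fin n) : Prop :=
  ∃ i j : Fin n, i ≠ j ∧ t ≠ i ∧ t ≠ j ∧ REss f i j t

/-- `m` is a hub of `t` : `t` is essential on every hyperplane through `m`. -/
def Hub (f : (Fin n → A) → B) (t m : Fin n) : Prop :=
  m ≠ t ∧ ∀ c, c ≠ m → c ≠ t → REss f m c t

variable (f : (Fin n → A) → B)

lemma REss_symm {i j t : Fin n} (h : REss f i j t) : REss f j i t := by
  obtain ⟨a, b, ha, hb, hab, hne⟩ := h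
  exact ⟨a, b, ha.symm, hb.symm, hab, hne⟩

lemma not_REss_eq {i j m : Fin n} (h : ¬ REss f i j m) (hmi : m ≠ i) (hmj : m ≠ j)
    (a : Fin n → A) (ha : a i = a j) (v : A) :
    f (Function.update a m v) = f a := by
  by_contra h'
  exact h ⟨a, Function.update a m v, ha, by
      rw [Function.update_of_ne hmi.symm, Function.update_of_ne hmj.symm]; exact ha,
    fun x hx => (Function.update_of_ne hx _ _).symm, fun hh => h' hh.symm⟩

lemma not_DEss_eq {i j : Fin n} (h : ¬ DEss f i j) (hij : i ≠ j)
    (a : Fin n → A) (ha : a i = a j) (v : A) :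
    f (Function.update (Function.update a i v) j v) = f a := by
  by_contra h'
  refine h ⟨a, Function.update (Function.update a i v) j v, ha, ?_, ?_, fun hh => h' hh.symm⟩
  · rw [Function.update_of_ne hij, Function.update_self, Function.update_self]
  · intro m hmi hmj
    rw [Function.update_of_ne hmj, Function.update_of_ne hmi]

lemma claimA {i j t m : Fin n} (hR : REss f i j t) (hF : ¬ REss f i j m)
    (hmi : m ≠ i) (hmj : m ≠ j) (c : Fin n) (hcm : c ≠ m) (hct : c ≠ t) :
    REss f m c t := by
  obtain ⟨a, b, ha, hb, hab, hne⟩ := hR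
  refine ⟨Function.update a m (a c), Function.update b m (b c), ?_, ?_, ?_, ?_⟩
  · rw [Function.update_self, Function.update_of_ne hcm]
  · rw [Function.update_self, Function.update_of_ne hcm]
  · intro x hx
    by_cases hxm : x = m
    · subst hxm
      rw [Function.update_self, Function.update_self]
      exact hab c hct
    · rw [Function.update_of_ne hxm, Function.update_of_ne hxm]
      exact hab x hx
  · rw [not_REss_eq f hF hmi hmj a ha, not_REss_eq f hF hmi hmj b hb]
    exact hne

lemma hub_from {i j t m : Fin n} (hR : REss f i j t) (hF : ¬ REss f i j m)
    (hmi : m ≠ i) (hmj : m ≠ j) : Hub f t m := by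
  refine ⟨fun h => hF (h ▸ hR), fun c hcm hct => claimA f hR hF hmi hmj c hcm hct⟩

lemma hub_step {t m m' : Fin n} (hm : Hub f t m) (c : Fin n) (hcm : c ≠ m) (hct : c ≠ t)
    (hF : ¬ REss f m c m') (h1 : m' ≠ m) (h2 : m' ≠ c) : Hub f t m' :=
  hub_from f (hm.2 c hcm hct) hF h1 h2

lemma REss_essAt {i j t : Fin n} (h : REss f i j t) : EssAt (idMinor f i j) t := by
  obtain ⟨a, b, ha, hb, hab, hne⟩ := h
  refine ⟨a, b, hab, ?_⟩
  have e1 : Function.update a i (a j) = a := by rw [← ha]; exact Function.update_eq_self i a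
  have e2 : Function.update b i (b j) = b := by rw [← hb]; exact Function.update_eq_self i b
  show f (Function.update a i (a j)) ≠ f (Function.update b i (b j))
  rw [e1, e2]; exact hne

lemma DEss_essAt {i j : Fin n} (h : DEss f i j) (hij : i ≠ j) :
    EssAt (idMinor f i j) j := by
  obtain ⟨a, b, ha, hb, hab, hne⟩ := h
  refine ⟨a, Function.update a j (b j), fun m hm => (Function.update_of_ne hm _ _).symm, ?_⟩
  have e1 : Function.update a i (a j) = a := by rw [← ha]; exact Function.update_eq_self i a
  have e2 : Function.update (Function.update a j (b j)) i ((Function.update a j (b j)) j) = b := by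
    funext m
    by_cases hmi : m = i
    · subst hmi
      rw [Function.update_self, Function.update_self]
      exact hb.symm
    · rw [Function.update_of_ne hmi]
      by_cases hmj : m = j
      · subst hmj; rw [Function.update_self]
      · rw [Function.update_of_ne hmj]
        exact hab m hmi hmj
  show f (Function.update a i (a j)) ≠
    f (Function.update (Function.update a j (b j)) i ((Function.update a j (b j)) j))
  rw [e1, e2]; exact hne

/-- chain (a): for a pure variable `k`, every other `t` is essential on one of the
planes `(k,p)`, `(k,q)`. -/
lemma chainA {k p q t : Fin n} (hqk : q ≠ k) (htk : t ≠ k) (htp : t ≠ p) (htq : t ≠ q)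
    (a : Fin n → A) (hak : a k = a p) (hfne : f a ≠ f (Function.update a k (a q)))
    (h1 : ¬ REss f k p t) (h2 : ¬ REss f t q k) (h3 : ¬ REss f k q t) : False := by
  set y := Function.update a t (a q) with hy
  have e1 : f y = f a := not_REss_eq f h1 htk htp a hak (a q)
  have hyplane : y t = y q := by
    rw [hy, Function.update_self, Function.update_of_ne htq.symm]
  set z := Function.update y k (a q) with hz
  have e2 : f z = f y := not_REss_eq f h2 (Ne.symm htk) (Ne.symm hqk) y hyplane (a q)
  have hzplane : z k = z q := by
    rw [hz, Function.update_self, Function.update_of_ne hqk, hy,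
      Function.update_of_ne htq.symm]
  have e3 : f (Function.update z t (a t)) = f z :=
    not_REss_eq f h3 htk htq z hzplane (a t)
  have hfin : Function.update z t (a t) = Function.update a k (a q) := by
    funext m
    by_cases hmt : m = t
    · subst hmt
      rw [Function.update_self, Function.update_of_ne htk]
    · rw [Function.update_of_ne hmt, hz]
      by_cases hmk : m = k
      · subst hmk
        rw [Function.update_self, Function.update_self]
      · rw [Function.update_of_ne hmk, Function.update_of_ne hmk, hy,
          Function.update_of_ne hmt]
  rw [hfin] at e3
  exact hfne (e3.trans (e2.trans e1)).symm

/-- chain (b): `DEss k p ∨ REss k q p` for a pure `k`. -/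
lemma chainB {k p q : Fin n} (hpk : p ≠ k) (hqk : q ≠ k) (hpq : p ≠ q)
    (a : Fin n → A) (hak : a k = a p) (hfne : f a ≠ f (Function.update a k (a q)))
    (h1 : ¬ DEss f k p) (h2 : ¬ REss f k q p) : False := by
  set z := Function.update (Function.update a k (a q)) p (a q) with hzdef
  have e1 : f z = f a := not_DEss_eq f h1 (Ne.symm hpk) a hak (a q)
  have hzplane : z k = z q := by
    rw [hzdef, Function.update_of_ne hpk.symm, Function.update_self,
      Function.update_of_ne (Ne.symm hpq), Function.update_of_ne hqk]
  have e2 : f (Function.update z p (a p)) = f z :=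
    not_REss_eq f h2 hpk hpq z hzplane (a p)
  have hfin : Function.update z p (a p) = Function.update a k (a q) := by
    funext m
    by_cases hmp : m = p
    · subst hmp
      rw [Function.update_self, Function.update_of_ne hpk]
    · rw [Function.update_of_ne hmp, hzdef, Function.update_of_ne hmp]
  rw [hfin] at e2
  exact hfne (e2.trans e1).symm

/-- extraction of "pure data" for a variable with no T1 witness. -/
lemma pure_data (hn : 3 < n) {k : Fin n} (hEss : EssAtOn f (Aneq A n) k)
    (hkT1 : ¬ T1 f k) :
    ∃ (p q : Fin n) (a : Fin n → A), p ≠ k ∧ q ≠ k ∧ p ≠ q ∧ a k = a p ∧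
      f a ≠ f (Function.update a k (a q)) := by
  obtain ⟨a, b, haA, hbA, hab, hfne⟩ := hEss
  have hn1 : n ≠ 1 := by omega
  -- a's repeated pair must involve k
  have hex_p : ∃ p, p ≠ k ∧ a k = a p := by
    rcases haA with hone | ⟨i, j, hij, haij⟩
    · exact absurd hone hn1
    by_cases hki : k = i
    · subst hki
      exact ⟨j, Ne.symm hij, haij⟩
    by_cases hkj : k = j
    · subst hkj
      exact ⟨i, hij, haij.symm⟩
    · have hik : i ≠ k := fun h => hki h.symm
      have hjk : j ≠ k := fun h => hkj h.symm
      have hbij : b i = b j := (hab i hik).symm.trans (haij.trans (hab j hjk))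
      exact absurd (⟨i, j, hij, hki, hkj, a, b, haij, hbij, hab, hfne⟩ : T1 f k) hkT1
  have hex_q : ∃ q, q ≠ k ∧ b k = b q := by
    rcases hbA with hone | ⟨i, j, hij, hbij⟩
    · exact absurd hone hn1
    by_cases hki : k = i
    · subst hki
      exact ⟨j, Ne.symm hij, hbij⟩
    by_cases hkj : k = j
    · subst hkj
      exact ⟨i, hij, hbij.symm⟩
    · have hik : i ≠ k := fun h => hki h.symm
      have hjk : j ≠ k := fun h => hkj h.symm
      have haij : a i = a j := (hab i hik).trans (hbij.trans (hab j hjk).symm)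
      exact absurd (⟨i, j, hij, hki, hkj, a, b, haij, hbij, hab, hfne⟩ : T1 f k) hkT1
  obtain ⟨p, hpk, hakp⟩ := hex_p
  obtain ⟨q, hqk, hbkq⟩ := hex_q
  have hbq : b k = a q := hbkq.trans (hab q hqk).symm
  have hb : b = Function.update a k (a q) := by
    funext m
    by_cases hmk : m = k
    · subst hmk; rw [Function.update_self]; exact hbq
    · rw [Function.update_of_ne hmk]; exact (hab m hmk).symm
  have hpq : p ≠ q := by
    intro h
    subst h
    apply hfne
    have : a = b := by
      funext m
      by_cases hmk : m = k
      · subst hmk; rw [hb, Function.update_self, ← hakp]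
      · exact hab m hmk
    rw [← this]
  exact ⟨p, q, a, hpk, hqk, hpq, hakp, hb ▸ hfne⟩

end Aux

section Count

variable {A B : Type*} {n : ℕ} (f : (Fin n → A) → B)

/-- A flat (non-essential) real direction exists on every plane, given the small-minor
hypothesis. -/
lemma exists_flat (hn : 3 < n) {i j : Fin n} (hij : i ≠ j)
    (hsm : essArity (idMinor f i j) ≤ n - 3) :
    ∃ m, m ≠ i ∧ m ≠ j ∧ ¬ REss f i j m := by
  by_contra hcon
  push_neg at hcon
  have hsub : (↑(({i, j} : Finset (Fin n))ᶜ) : Set (Fin n)) ⊆ {x | EssAt (idMinor f i j) x} := by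
    intro x hx
    simp only [Finset.coe_compl, Set.mem_compl_iff, Finset.mem_coe, Finset.mem_insert,
      Finset.mem_singleton, not_or] at hx
    exact REss_essAt f (hcon x hx.1 hx.2)
  have hcard : (({i, j} : Finset (Fin n))ᶜ).card = n - 2 := by
    rw [Finset.card_compl]
    have : ({i, j} : Finset (Fin n)).card = 2 := by
      rw [Finset.card_insert_of_notMem (by simp [hij]), Finset.card_singleton]
    rw [this, Fintype.card_fin]
  have hle : n - 2 ≤ essArity (idMinor f i j) := by
    rw [← hcard, ← Set.ncard_coe_finset]
    exact Set.ncard_le_ncard hsub (Set.toFinite _)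
  omega

lemma exists_ne_ne (hn : 3 < n) (x y : Fin n) : ∃ c : Fin n, c ≠ x ∧ c ≠ y := by
  have hcard : 0 < (({x, y} : Finset (Fin n))ᶜ).card := by
    rw [Finset.card_compl, Fintype.card_fin]
    have h2 : ({x, y} : Finset (Fin n)).card ≤ 2 := by
      apply le_trans (Finset.card_insert_le _ _)
      simp
    omega
  obtain ⟨c, hc⟩ := Finset.card_pos.mp hcard
  simp only [Finset.mem_compl, Finset.mem_insert, Finset.mem_singleton, not_or] at hc
  exact ⟨c, hc.1, hc.2⟩

lemma hub3 (hn : 3 < n)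
    (Hs : ∀ i j : Fin n, i ≠ j → ∃ m, m ≠ i ∧ m ≠ j ∧ ¬ REss f i j m)
    {t : Fin n} (ht : T1 f t) :
    ∃ m₁ m₂ m₃ : Fin n, m₁ ≠ m₂ ∧ m₁ ≠ m₃ ∧ m₂ ≠ m₃ ∧
      Hub f t m₁ ∧ Hub f t m₂ ∧ Hub f t m₃ := by
  obtain ⟨i, j, hij, hti, htj, hR⟩ := ht
  obtain ⟨m₁, h1i, h1j, h1F⟩ := Hs i j hij
  have hub₁ : Hub f t m₁ := hub_from f hR h1F h1i h1j
  obtain ⟨c, hc1, hct⟩ := exists_ne_ne hn m₁ t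
  obtain ⟨m₂, h2m, h2c, h2F⟩ := Hs m₁ c hc1.symm
  have hub₂ : Hub f t m₂ := hub_step f hub₁ c hc1 hct h2F h2m h2c
  obtain ⟨m₃, h3m, h3c, h3F⟩ := Hs m₁ m₂ h2m.symm
  have hub₃ : Hub f t m₃ := hub_step f hub₁ m₂ h2m hub₂.1 h3F h3m h3c
  exact ⟨m₁, m₂, m₃, h2m.symm, h3m.symm, h3c.symm, hub₁, hub₂, hub₃⟩

/-- The "pair-kill" contradiction machine. -/
lemma PK (Hs : ∀ i j : Fin n, i ≠ j → ∃ m, m ≠ i ∧ m ≠ j ∧ ¬ REss f i j m)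
    (S : Finset (Fin n)) (x y : Fin n) (hxy : x ≠ y)
    (hhit : ∀ t ∈ S, t ≠ x → t ≠ y → Hub f t x ∨ Hub f t y)
    (hcon : ∀ z, z ≠ x → z ≠ y → (∀ t ∈ S, t ≠ x → t ≠ y → Hub f t z) → False) : False := by
  obtain ⟨z, hzx, hzy, hzF⟩ := Hs x y hxy
  refine hcon z hzx hzy ?_
  intro t htS htx hty
  rcases hhit t htS htx hty with h | h
  · exact hub_from f (h.2 y hxy.symm (Ne.symm hty)) hzF hzx hzy
  · exact hub_from f (h.2 x hxy (Ne.symm htx)) (fun hh => hzF (REss_symm f hh)) hzy hzx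

lemma pick_avoid2 {w₁ w₂ w₃ : Fin n} (h12 : w₁ ≠ w₂) (h13 : w₁ ≠ w₃) (h23 : w₂ ≠ w₃)
    (a b : Fin n) : ∃ y, (y = w₁ ∨ y = w₂ ∨ y = w₃) ∧ y ≠ a ∧ y ≠ b := by
  by_cases h1a : w₁ = a
  · subst h1a
    by_cases h2b : w₂ = b
    · subst h2b
      exact ⟨w₃, Or.inr (Or.inr rfl), Ne.symm h13, Ne.symm h23⟩
    · exact ⟨w₂, Or.inr (Or.inl rfl), Ne.symm h12, h2b⟩
  · by_cases h1b : w₁ = b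
    · subst h1b
      by_cases h2a : w₂ = a
      · subst h2a
        exact ⟨w₃, Or.inr (Or.inr rfl), Ne.symm h23, Ne.symm h13⟩
      · exact ⟨w₂, Or.inr (Or.inl rfl), h2a, Ne.symm h12⟩
    · exact ⟨w₁, Or.inl rfl, h1a, h1b⟩

end Count

section InterLemma

variable {A B : Type*} {n : ℕ} (f : (Fin n → A) → B)

lemma inter_lemma (hn : 3 < n)
    (Hs : ∀ i j : Fin n, i ≠ j → ∃ m, m ≠ i ∧ m ≠ j ∧ ¬ REss f i j m) :
    ∀ (N : ℕ) (S : Finset (Fin n)), S.card ≤ N → S.Nonempty → (∀ t ∈ S, T1 f t) →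
    ∃ w₁ w₂ w₃ : Fin n, w₁ ≠ w₂ ∧ w₁ ≠ w₃ ∧ w₂ ≠ w₃ ∧
      ∀ t ∈ S, Hub f t w₁ ∧ Hub f t w₂ ∧ Hub f t w₃ := by
  intro N
  induction N with
  | zero =>
    intro S hcard hne _
    have := Finset.card_pos.mpr hne
    omega
  | succ N ih =>
    intro S hcard hne hT1
    classical
    by_cases hsmall : S.card ≤ N
    · exact ih S hsmall hne hT1
    by_cases h1 : S.card = 1
    · obtain ⟨t, rfl⟩ := Finset.card_eq_one.mp h1
      obtain ⟨m₁, m₂, m₃, d12, d13, d23, hb₁, hb₂, hb₃⟩ :=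
        hub3 f hn Hs (hT1 t (Finset.mem_singleton_self t))
      exact ⟨m₁, m₂, m₃, d12, d13, d23, fun t' ht' => by
        rw [Finset.mem_singleton] at ht'; subst ht'; exact ⟨hb₁, hb₂, hb₃⟩⟩
    obtain ⟨tstar, htstar⟩ := hne
    set S' := S.erase tstar with hS'
    have hcard2 : 2 ≤ S.card := by
      have := Finset.card_pos.mpr ⟨tstar, htstar⟩
      omega
    have hS'card : S'.card ≤ N := by
      rw [hS', Finset.card_erase_of_mem htstar]; omega
    have hS'ne : S'.Nonempty := by
      rw [← Finset.card_pos, hS', Finset.card_erase_of_mem htstar]; omega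
    obtain ⟨w₁, w₂, w₃, h12, h13, h23, hw⟩ :=
      ih S' hS'card hS'ne (fun t ht => hT1 t (Finset.mem_of_mem_erase ht))
    by_contra hgoal
    set CH : Fin n → Prop := fun w => ∀ t ∈ S, Hub f t w with hCH
    set J : Finset (Fin n) := Finset.univ.filter CH with hJ
    have hJmem : ∀ w, w ∈ J ↔ CH w := by
      intro w; rw [hJ, Finset.mem_filter]; simp
    have hCHnotS : ∀ w, CH w → w ∉ S := fun w hw' hwS => (hw' w hwS).1 rfl
    have hwnotS' : ∀ y, (y = w₁ ∨ y = w₂ ∨ y = w₃) → y ∉ S' := by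
      intro y hy hyS'
      rcases hy with rfl | rfl | rfl
      · exact ((hw y hyS').1).1 rfl
      · exact ((hw y hyS').2.1).1 rfl
      · exact ((hw y hyS').2.2).1 rfl
    have hwhub : ∀ y, (y = w₁ ∨ y = w₂ ∨ y = w₃) → ∀ t ∈ S', Hub f t y := by
      intro y hy t ht
      rcases hy with rfl | rfl | rfl
      · exact (hw t ht).1
      · exact (hw t ht).2.1
      · exact (hw t ht).2.2
    have hJcard : J.card ≤ 2 := by
      by_contra hJ3
      push_neg at hJ3
      obtain ⟨T, hTsub, hTcard⟩ := Finset.exists_subset_card_eq (s := J) (n := 3) (by omega)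
      obtain ⟨u, v, w, duv, duw, dvw, rfl⟩ := Finset.card_eq_three.mp hTcard
      exact hgoal ⟨u, v, w, duv, duw, dvw, fun t ht =>
        ⟨(hJmem u).mp (hTsub (by simp)) t ht,
         (hJmem v).mp (hTsub (by simp)) t ht,
         (hJmem w).mp (hTsub (by simp)) t ht⟩⟩
    have hJc : J.card = 0 ∨ J.card = 1 ∨ J.card = 2 := by omega
    rcases hJc with hc0 | hc1 | hc2
    · rw [Finset.card_eq_zero] at hc0
      obtain ⟨x, hxor, hxt, _⟩ := pick_avoid2 h12 h13 h23 tstar tstar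
      have hxCH' : ∀ t ∈ S', Hub f t x := hwhub x hxor
      have hxnotS : x ∉ S := by
        intro hxS
        exact hwnotS' x hxor (Finset.mem_erase.mpr ⟨hxt, hxS⟩)
      by_cases hex : ∃ y, Hub f tstar y ∧ y ∉ S ∧ y ≠ x
      · obtain ⟨y, hyhub, hynS, hyx⟩ := hex
        refine PK f Hs S x y (Ne.symm hyx) ?_ ?_
        · intro t htS htx hty
          by_cases htt : t = tstar
          · subst htt; exact Or.inr hyhub
          · exact Or.inl (hxCH' t (Finset.mem_erase.mpr ⟨htt, htS⟩))
        · intro z hzx hzy hz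
          have hzCH : CH z := fun t htS =>
            hz t htS (fun h => hxnotS (h ▸ htS)) (fun h => hynS (h ▸ htS))
          have hzJ : z ∈ J := (hJmem z).mpr hzCH
          rw [hc0] at hzJ
          exact absurd hzJ (Finset.notMem_empty z)
      · push_neg at hex
        obtain ⟨m₁, m₂, m₃, d12, d13, d23, hb₁, hb₂, hb₃⟩ :=
          hub3 f hn Hs (hT1 tstar htstar)
        obtain ⟨s₀, hs₀or, hs₀x, _⟩ := pick_avoid2 d12 d13 d23 x x
        have hs₀hub : Hub f tstar s₀ := by
          rcases hs₀or with rfl | rfl | rfl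
          exacts [hb₁, hb₂, hb₃]
        have hs₀S : s₀ ∈ S := by
          by_contra hns
          exact hs₀x (hex s₀ hs₀hub hns)
        have hs₀t : s₀ ≠ tstar := hs₀hub.1
        refine PK f Hs S x s₀ (Ne.symm hs₀x) ?_ ?_
        · intro t htS htx hts
          by_cases htt : t = tstar
          · subst htt; exact Or.inr hs₀hub
          · exact Or.inl (hxCH' t (Finset.mem_erase.mpr ⟨htt, htS⟩))
        · intro z hzx hzs hz
          have hzt : Hub f tstar z := hz tstar htstar (Ne.symm hxt) (Ne.symm hs₀t)
          have hzS : z ∈ S := by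
            by_contra hns
            exact hzx (hex z hzt hns)
          exact (hz z hzS hzx hzs).1 rfl
    · obtain ⟨w0, hJw⟩ := Finset.card_eq_one.mp hc1
      have hCHw : CH w0 := (hJmem w0).mp (by rw [hJw]; exact Finset.mem_singleton_self w0)
      have hw0notS : w0 ∉ S := hCHnotS w0 hCHw
      obtain ⟨y, hyor, hyw, hyt⟩ := pick_avoid2 h12 h13 h23 w0 tstar
      have hynotS : y ∉ S := by
        intro hyS
        exact hwnotS' y hyor (Finset.mem_erase.mpr ⟨hyt, hyS⟩)
      refine PK f Hs S w0 y (Ne.symm hyw) ?_ ?_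
      · intro t htS _ _
        exact Or.inl (hCHw t htS)
      · intro z hzw hzy hz
        have hzCH : CH z := fun t htS =>
          hz t htS (fun h => hw0notS (h ▸ htS)) (fun h => hynotS (h ▸ htS))
        have hzJ : z ∈ J := (hJmem z).mpr hzCH
        rw [hJw, Finset.mem_singleton] at hzJ
        exact hzw hzJ
    · obtain ⟨u, v, huv, hJuv⟩ := Finset.card_eq_two.mp hc2
      have hCHu : CH u := (hJmem u).mp (by rw [hJuv]; simp)
      have hCHv : CH v := (hJmem v).mp (by rw [hJuv]; simp)
      have hunotS : u ∉ S := hCHnotS u hCHu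
      have hvnotS : v ∉ S := hCHnotS v hCHv
      refine PK f Hs S u v huv ?_ ?_
      · intro t htS _ _
        exact Or.inl (hCHu t htS)
      · intro z hzu hzv hz
        have hzCH : CH z := fun t htS =>
          hz t htS (fun h => hunotS (h ▸ htS)) (fun h => hvnotS (h ▸ htS))
        have hzJ : z ∈ J := (hJmem z).mpr hzCH
        rw [hJuv] at hzJ
        rcases Finset.mem_insert.mp hzJ with h | h
        · exact hzu h
        · exact hzv (Finset.mem_singleton.mp h)

end InterLemma

section Support

variable {A B : Type*} {n : ℕ}

lemma essOn_all (f : (Fin n → A) → B) (hn : 3 < n) (hq : qarity f = n) :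
    ∀ k, EssAtOn f (Aneq A n) k := by
  intro k
  by_contra hk
  classical
  have h0 : (0 : ℕ) < n := by omega
  have h1 : (1 : ℕ) < n := by omega
  set z : Fin n := ⟨0, h0⟩ with hz
  set o : Fin n := ⟨1, h1⟩ with ho
  have hzo : z ≠ o := by
    simp [hz, ho, Fin.ext_iff]
  set i₀ : Fin n := if k = z then o else z with hi₀
  have hi₀k : i₀ ≠ k := by
    rw [hi₀]
    split_ifs with h
    · rw [h]; exact hzo.symm
    · exact fun hh => h hh.symm
  set g : (Fin n → A) → B :=
    fun x => if x ∈ Aneq A n then f x else f (Function.update x k (x i₀)) with hg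
  have gdef : ∀ x, g x = if x ∈ Aneq A n then f x else f (Function.update x k (x i₀)) :=
    fun x => rfl
  have hsupp : IsSupport f g := by
    intro x hx
    rw [gdef x, if_pos hx]
  have hupdA : ∀ x : Fin n → A, Function.update x k (x i₀) ∈ Aneq A n := by
    intro x
    refine Or.inr ⟨k, i₀, Ne.symm hi₀k, ?_⟩
    rw [Function.update_self, Function.update_of_ne hi₀k]
  have hgk : ¬ EssAt g k := by
    rintro ⟨a, b, hab, hne⟩
    apply hne
    by_cases haA : a ∈ Aneq A n <;> by_cases hbA : b ∈ Aneq A n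
    · rw [gdef a, gdef b, if_pos haA, if_pos hbA]
      by_contra hfne
      exact hk ⟨a, b, haA, hbA, hab, hfne⟩
    · rw [gdef a, gdef b, if_pos haA, if_neg hbA]
      have hagree : ∀ m, m ≠ k → a m = Function.update b k (b i₀) m := by
        intro m hm
        rw [Function.update_of_ne hm]
        exact hab m hm
      by_contra hfne
      exact hk ⟨a, _, haA, hupdA b, hagree, hfne⟩
    · rw [gdef a, gdef b, if_neg haA, if_pos hbA]
      have hagree : ∀ m, m ≠ k → Function.update a k (a i₀) m = b m := by
        intro m hm
        rw [Function.update_of_ne hm]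
        exact hab m hm
      by_contra hfne
      exact hk ⟨_, b, hupdA a, hbA, hagree, hfne⟩
    · rw [gdef a, gdef b, if_neg haA, if_neg hbA]
      congr 1
      funext m
      by_cases hm : m = k
      · subst hm
        rw [Function.update_self, Function.update_self]
        exact hab i₀ hi₀k
      · rw [Function.update_of_ne hm, Function.update_of_ne hm]
        exact hab m hm
  have hess : essArity g ≤ n - 1 := by
    have hsub : {i : Fin n | EssAt g i} ⊆ (↑(({k} : Finset (Fin n))ᶜ) : Set (Fin n)) := by
      intro x hx
      simp only [Finset.coe_compl, Set.mem_compl_iff, Finset.mem_coe, Finset.mem_singleton]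
      intro hxk
      subst hxk
      exact hgk hx
    calc essArity g ≤ (↑(({k} : Finset (Fin n))ᶜ) : Set (Fin n)).ncard :=
          Set.ncard_le_ncard hsub (Set.toFinite _)
      _ = n - 1 := by
          rw [Set.ncard_coe_finset, Finset.card_compl, Finset.card_singleton,
            Fintype.card_fin]
  have hle : qarity f ≤ essArity g := Nat.sInf_le ⟨g, hsupp, rfl⟩
  omega

end Support

theorem stmt10 {A B : Type*} [Fintype A] (h2 : 2 ≤ Fintype.card A) {n : ℕ}
    (hn : 3 < n) (f : (Fin n → A) → B) (hdep : ∀ i : Fin n, EssAt f i)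
    (hq : qarity f = n) :
    arityGap f ≤ 2 := by
  classical
  by_contra hgap
  have hessf : essArity f = n := by
    unfold essArity
    have hset : {i : Fin n | EssAt f i} = Set.univ :=
      Set.eq_univ_of_forall (s := {i : Fin n | EssAt f i}) hdep
    rw [hset, Set.ncard_univ, Nat.card_eq_fintype_card, Fintype.card_fin]
  have Hsm : ∀ i j : Fin n, i ≠ j → essArity (idMinor f i j) ≤ n - 3 := by
    intro i j hij
    by_contra hbig
    push_neg at hbig
    apply hgap
    calc arityGap f ≤ essArity f - essArity (idMinor f i j) :=
        Nat.sInf_le ⟨i, j, hij, hdep i, hdep j, rfl⟩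
      _ ≤ 2 := by rw [hessf]; omega
  have Hs : ∀ i j : Fin n, i ≠ j → ∃ m, m ≠ i ∧ m ≠ j ∧ ¬ REss f i j m :=
    fun i j hij => exists_flat f hn hij (Hsm i j hij)
  have hEssOn : ∀ k, EssAtOn f (Aneq A n) k := essOn_all f hn hq
  by_cases hallT1 : ∀ t, T1 f t
  · have hne : (Finset.univ : Finset (Fin n)).Nonempty :=
      ⟨⟨0, by omega⟩, Finset.mem_univ _⟩
    obtain ⟨w₁, w₂, w₃, _, _, _, hw⟩ :=
      inter_lemma f hn Hs Finset.univ.card Finset.univ le_rfl hne (fun t _ => hallT1 t)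
    exact ((hw w₁ (Finset.mem_univ w₁)).1).1 rfl
  · push_neg at hallT1
    obtain ⟨k, hkT1⟩ := hallT1
    obtain ⟨p, q, a, hpk, hqk, hpq, hak, hfne⟩ := pure_data f hn (hEssOn k) hkT1
    have hT1out : ∀ t, t ≠ k → t ≠ p → t ≠ q → T1 f t := by
      intro t htk htp htq
      have hor : REss f k p t ∨ REss f k q t := by
        by_contra hc
        push_neg at hc
        refine chainA f hqk htk htp htq a hak hfne hc.1 ?_ hc.2
        intro hR
        exact hkT1 ⟨t, q, htq, Ne.symm htk, Ne.symm hqk, hR⟩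
      rcases hor with h | h
      · exact ⟨k, p, Ne.symm hpk, htk, htp, h⟩
      · exact ⟨k, q, Ne.symm hqk, htk, htq, h⟩
    set S : Finset (Fin n) := ({k, p, q} : Finset (Fin n))ᶜ with hS
    have hkpqcard : ({k, p, q} : Finset (Fin n)).card = 3 := by
      rw [Finset.card_insert_of_notMem (by simp [Ne.symm hpk, Ne.symm hqk]),
        Finset.card_insert_of_notMem (by simp [hpq]), Finset.card_singleton]
    have hScard : S.card = n - 3 := by
      rw [hS, Finset.card_compl, hkpqcard, Fintype.card_fin]
    have hSne : S.Nonempty := by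
      rw [← Finset.card_pos, hScard]; omega
    have hSmem : ∀ t, t ∈ S ↔ (t ≠ k ∧ t ≠ p ∧ t ≠ q) := by
      intro t
      rw [hS, Finset.mem_compl]
      simp [not_or]
    have hST1 : ∀ t ∈ S, T1 f t := by
      intro t ht
      obtain ⟨hh1, hh2, hh3⟩ := (hSmem t).mp ht
      exact hT1out t hh1 hh2 hh3
    obtain ⟨w₁, w₂, w₃, h12, h13, h23, hw⟩ :=
      inter_lemma f hn Hs S.card S le_rfl hSne hST1
    have hwmem : ∀ y, (y = w₁ ∨ y = w₂ ∨ y = w₃) → (y = k ∨ y = p ∨ y = q) := by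
      intro y hy
      by_contra hc
      push_neg at hc
      have hyS : y ∈ S := (hSmem y).mpr ⟨hc.1, hc.2.1, hc.2.2⟩
      rcases hy with rfl | rfl | rfl
      · exact ((hw y hyS).1).1 rfl
      · exact ((hw y hyS).2.1).1 rfl
      · exact ((hw y hyS).2.2).1 rfl
    have hk_in : k = w₁ ∨ k = w₂ ∨ k = w₃ := by
      by_contra hkn
      push_neg at hkn
      have h1' : w₁ = p ∨ w₁ = q := by
        rcases hwmem w₁ (Or.inl rfl) with h | h
        · exact absurd h.symm hkn.1
        · exact h
      have h2' : w₂ = p ∨ w₂ = q := by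
        rcases hwmem w₂ (Or.inr (Or.inl rfl)) with h | h
        · exact absurd h.symm hkn.2.1
        · exact h
      have h3' : w₃ = p ∨ w₃ = q := by
        rcases hwmem w₃ (Or.inr (Or.inr rfl)) with h | h
        · exact absurd h.symm hkn.2.2
        · exact h
      rcases h1' with e1 | e1 <;> rcases h2' with e2 | e2 <;> rcases h3' with e3 | e3 <;>
        first
          | exact h12 (e1.trans e2.symm)
          | exact h13 (e1.trans e3.symm)
          | exact h23 (e2.trans e3.symm)
    have hHubk : ∀ t ∈ S, Hub f t k := by
      intro t ht
      rcases hk_in with h | h | h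
      · rw [h]; exact (hw t ht).1
      · rw [h]; exact (hw t ht).2.1
      · rw [h]; exact (hw t ht).2.2
    have hRkp : ∀ t ∈ S, REss f k p t := by
      intro t ht
      obtain ⟨_, hh2, _⟩ := (hSmem t).mp ht
      exact (hHubk t ht).2 p hpk (Ne.symm hh2)
    have hRkq : ∀ t ∈ S, REss f k q t := by
      intro t ht
      obtain ⟨_, _, hh3⟩ := (hSmem t).mp ht
      exact (hHubk t ht).2 q hqk (Ne.symm hh3)
    have hpnotS : p ∉ S := fun hp => ((hSmem p).mp hp).2.1 rfl
    have hdisj : DEss f k p ∨ REss f k q p := by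
      by_contra hc
      push_neg at hc
      exact chainB f hpk hqk hpq a hak hfne hc.1 hc.2
    have hcard' : (insert p S).card = n - 2 := by
      rw [Finset.card_insert_of_notMem hpnotS, hScard]; omega
    rcases hdisj with hD | hR
    · have hsub : (↑(insert p S) : Set (Fin n)) ⊆ {x | EssAt (idMinor f k p) x} := by
        intro x hx
        rcases Finset.mem_insert.mp (Finset.mem_coe.mp hx) with h | h
        · subst h; exact DEss_essAt f hD (Ne.symm hpk)
        · exact REss_essAt f (hRkp x h)
      have hge : n - 2 ≤ essArity (idMinor f k p) := by
        rw [← hcard', ← Set.ncard_coe_finset]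
        exact Set.ncard_le_ncard hsub (Set.toFinite _)
      have := Hsm k p (Ne.symm hpk)
      omega
    · have hsub : (↑(insert p S) : Set (Fin n)) ⊆ {x | EssAt (idMinor f k q) x} := by
        intro x hx
        rcases Finset.mem_insert.mp (Finset.mem_coe.mp hx) with h | h
        · subst h; exact REss_essAt f hR
        · exact REss_essAt f (hRkq x h)
      have hge : n - 2 ≤ essArity (idMinor f k q) := by
        rw [← hcard', ← Set.ncard_coe_finset]
        exact Set.ncard_le_ncard hsub (Set.toFinite _)
      have := Hsm k q (Ne.symm hqk)
      omega
end

section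
/- (Willard) Suppose f : A^n → B depends on all of its n variables, where A is finite with |A| = k elements and n > k. Then the arity gap of f is at most 2. -/
/-!
Suppose every identification minor `f_{i←j}` had at most `n - 3` essential variables, and let
`E(i,j)` be the set of variables essential for `f` on the slice `x_i = x_j`; the minor sees
`E(i,j)`, plus `x_j` when the common value of `x_i = x_j` matters. If `x_c` is inessential on the
slice `x_i = x_j`, then setting `x_c := x_w` moves witnesses of essentiality to the slice
`x_c = x_w`, so `E(i,j) ⊆ E(c,w)`. Starting from a largest `E(i,j)` this yields a core `W` with
`E(x,y) = W` for all distinct `x, y ∉ W`; on these slices the common value is irrelevant, so `f` is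
determined by its `W`-coordinates on every tuple repeating a value outside `W`. Some tuple `γ`
breaks this, since the variables outside `W` are essential; as `n > |A|`, `γ` repeats a value at
some `p ∈ W` and `q`, and then all `n - 2` other variables are essential on the slice
`x_p = x_q` (when `q ∈ W`, after passing to a second core containing the complement of `W`).
-/

namespace ArityGap

open Function

variable {A B : Type*} {n : ℕ} {f : (Fin n → A) → B}

theorem eq_of_forall_essAt {a b : Fin n → A} (h : ∀ i, EssAt f i → a i = b i) : f a = f b := by
  classical
  suffices key : ∀ s : Finset (Fin n), ∀ a : Fin n → A, (∀ i, EssAt f i → a i = b i) →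
      (∀ i ∉ s, a i = b i) → f a = f b from key Finset.univ a h (by simp)
  intro s
  induction s using Finset.induction_on with
  | empty => exact fun a _ hab => congrArg f (funext fun i => hab i (Finset.notMem_empty i))
  | insert r s _ ih =>
    intro a hess hab
    have hstep : f a = f (update a r (b r)) := by
      by_cases hr : EssAt f r
      · rw [← hess r hr, update_eq_self]
      · by_contra hne
        exact hr ⟨a, _, fun i hi => (update_of_ne hi _ _).symm, hne⟩
    rw [hstep]
    refine ih _ (fun i hi => ?_) (fun i hi => ?_) <;> rcases eq_or_ne i r with rfl | hir
    · simp
    · simp [hir, hess i hi]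
    · simp
    · simp [hir, hab i (by simp [hir, hi])]

theorem exists_notMem_of_ncard_lt {s : Set (Fin n)} (h : s.ncard < n) : ∃ z, z ∉ s := by
  by_contra! hs
  simp [Set.eq_univ_of_forall hs] at h

theorem exists_ne_ne_notMem {s : Set (Fin n)} (h : s.ncard + 2 < n) (x y : Fin n) :
    ∃ z, z ≠ x ∧ z ≠ y ∧ z ∉ s := by
  have := Set.ncard_insert_le x (insert y s)
  have := Set.ncard_insert_le y s
  obtain ⟨z, hz⟩ := exists_notMem_of_ncard_lt (s := insert x (insert y s)) (by omega)
  exact ⟨z, by simpa [not_or] using hz⟩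

def slice (i j : Fin n) : Set (Fin n → A) := {a | a i = a j}

@[simp]
theorem mem_slice {i j : Fin n} {a : Fin n → A} : a ∈ slice i j ↔ a i = a j := Iff.rfl

theorem slice_comm (i j : Fin n) : (slice i j : Set (Fin n → A)) = slice j i :=
  Set.ext fun _ => eq_comm

theorem update_mem_slice (a : Fin n → A) (i j : Fin n) : update a i (a j) ∈ slice i j := by
  simp [update_apply]

def sliceEss (f : (Fin n → A) → B) (i j : Fin n) : Set (Fin n) :=
  {ℓ | EssAtOn f (slice i j) ℓ}

theorem sliceEss_comm (f : (Fin n → A) → B) (i j : Fin n) : sliceEss f i j = sliceEss f j i := by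
  simp only [sliceEss, slice_comm]

theorem apply_eq_of_not_essAtOn {S : Set (Fin n → A)} {ℓ : Fin n} {a b : Fin n → A}
    (h : ¬ EssAtOn f S ℓ) (ha : a ∈ S) (hb : b ∈ S) (hab : ∀ r, r ≠ ℓ → a r = b r) :
    f a = f b := by
  by_contra hne
  exact h ⟨a, b, ha, hb, hab, hne⟩

theorem left_notMem_sliceEss {i j : Fin n} (hij : i ≠ j) : i ∉ sliceEss f i j := by
  rintro ⟨a, b, ha, hb, hab, hne⟩
  refine hne (congrArg f (funext fun r => ?_))
  rcases eq_or_ne r i with rfl | hr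
  · rw [mem_slice] at ha hb
    rw [ha, hb, hab j hij.symm]
  · exact hab r hr

theorem right_notMem_sliceEss {i j : Fin n} (hij : i ≠ j) : j ∉ sliceEss f i j :=
  sliceEss_comm f i j ▸ left_notMem_sliceEss hij.symm

theorem idMinor_apply_of_eq {i j : Fin n} {a : Fin n → A} (h : a i = a j) :
    idMinor f i j a = f a := by
  simp [idMinor, ← h]

theorem essAt_idMinor_of_mem_sliceEss {i j ℓ : Fin n} (h : ℓ ∈ sliceEss f i j) :
    EssAt (idMinor f i j) ℓ := by
  obtain ⟨a, b, ha, hb, hab, hne⟩ := h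
  exact ⟨a, b, hab, by rwa [idMinor_apply_of_eq ha, idMinor_apply_of_eq hb]⟩

theorem mem_sliceEss_of_essAt_idMinor {i j ℓ : Fin n} (hℓ : ℓ ≠ j)
    (h : EssAt (idMinor f i j) ℓ) : ℓ ∈ sliceEss f i j := by
  obtain ⟨a, b, hab, hne⟩ := h
  refine ⟨_, _, update_mem_slice a i j, update_mem_slice b i j, fun r hr => ?_, hne⟩
  rcases eq_or_ne r i with rfl | hri
  · simp [hab j hℓ.symm]
  · simp [hri, hab r hr]

theorem ncard_sliceEss_le {i j : Fin n} :
    (sliceEss f i j).ncard ≤ essArity (idMinor f i j) :=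
  Set.ncard_le_ncard (fun _ => essAt_idMinor_of_mem_sliceEss) (Set.toFinite _)

theorem ncard_sliceEss_lt {i j : Fin n} (hij : i ≠ j) (h : EssAt (idMinor f i j) j) :
    (sliceEss f i j).ncard < essArity (idMinor f i j) :=
  Set.ncard_lt_ncard ((Set.ssubset_iff_of_subset fun _ => essAt_idMinor_of_mem_sliceEss).2
    ⟨j, h, right_notMem_sliceEss hij⟩) (Set.toFinite _)

theorem apply_eq_of_eqOn_sliceEss {i j : Fin n} {a b : Fin n → A} (ha : a ∈ slice i j)
    (hb : b ∈ slice i j) (hE : Set.EqOn a b (sliceEss f i j))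
    (hj : a j = b j ∨ ¬ EssAt (idMinor f i j) j) : f a = f b := by
  rw [← idMinor_apply_of_eq (f := f) ha, ← idMinor_apply_of_eq (f := f) hb]
  refine eq_of_forall_essAt fun ℓ hℓ => ?_
  rcases eq_or_ne ℓ j with rfl | hℓj
  · exact hj.resolve_right (not_not.2 hℓ)
  · exact hE (mem_sliceEss_of_essAt_idMinor hℓj hℓ)

theorem sliceEss_subset_sliceEss {i j c w : Fin n} (hci : c ≠ i) (hcj : c ≠ j)
    (hc : c ∉ sliceEss f i j) (hw : w ∉ sliceEss f i j) (hwc : w ≠ c) :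
    sliceEss f i j ⊆ sliceEss f c w := by
  intro ℓ hℓ
  obtain ⟨a, b, ha, hb, hab, hne⟩ := id hℓ
  have hwℓ : w ≠ ℓ := fun h => hw (h ▸ hℓ)
  have hmove : ∀ a ∈ slice i j, f (update a c (a w)) = f a := fun a ha =>
    apply_eq_of_not_essAtOn hc (by simpa [hci.symm, hcj.symm] using ha) ha
      fun r hr => update_of_ne hr _ _
  refine ⟨update a c (a w), update b c (b w), by simp [hwc], by simp [hwc], fun r hr => ?_,
    by rwa [hmove a ha, hmove b hb]⟩
  rcases eq_or_ne r c with rfl | hrc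
  · simp [hab w hwℓ]
  · simp [hrc, hab r hr]

def MinorsDropThree (f : (Fin n → A) → B) : Prop :=
  ∀ i j, i ≠ j → essArity (idMinor f i j) + 3 ≤ n

theorem exists_notMem_sliceEss (hf : MinorsDropThree f) {x y : Fin n} (hxy : x ≠ y) :
    ∃ r, r ≠ x ∧ r ≠ y ∧ r ∉ sliceEss f x y := by
  have := ncard_sliceEss_le (f := f) (i := x) (j := y)
  have := hf x y hxy
  exact exists_ne_ne_notMem (by omega) x y

def IsCore (f : (Fin n → A) → B) (W : Set (Fin n)) : Prop :=
  ∀ x y, x ≠ y → x ∉ W → y ∉ W → sliceEss f x y = W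

theorem exists_isCore (hf : MinorsDropThree f) {x₁ y₁ : Fin n} (hxy : x₁ ≠ y₁)
    {C : Set (Fin n)} (hC : C ⊆ sliceEss f x₁ y₁) :
    ∃ W, C ⊆ W ∧ W.ncard + 3 ≤ n ∧ IsCore f W := by
  classical
  obtain ⟨⟨x₀, y₀⟩, h₀, hmax⟩ := (Finset.univ.filter fun p : Fin n × Fin n =>
      p.1 ≠ p.2 ∧ C ⊆ sliceEss f p.1 p.2).exists_max_image
    (fun p => (sliceEss f p.1 p.2).ncard) ⟨(x₁, y₁), by simp [hxy, hC]⟩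
  simp only [Finset.mem_filter, Finset.mem_univ, true_and] at h₀ hmax
  obtain ⟨hxy₀, hCW⟩ := h₀
  set W := sliceEss f x₀ y₀
  have hW : W.ncard + 3 ≤ n := (Nat.add_le_add_right ncard_sliceEss_le 3).trans (hf _ _ hxy₀)
  have grow : ∀ x y, x ≠ y → W ⊆ sliceEss f x y → sliceEss f x y = W := fun x y hxy hsub =>
    (Set.eq_of_subset_of_ncard_le hsub (hmax (x, y) ⟨hxy, hCW.trans hsub⟩)).symm
  obtain ⟨c, hcx₀, hcy₀, hcW⟩ := exists_ne_ne_notMem (s := W) (by omega) x₀ y₀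
  have hcore : ∀ w ∉ W, w ≠ c → sliceEss f c w = W := fun w hw hwc =>
    grow c w hwc.symm (sliceEss_subset_sliceEss hcx₀ hcy₀ hcW hw hwc)
  refine ⟨W, hCW, hW, fun x y hxy hx hy => ?_⟩
  rcases eq_or_ne x c with rfl | hxc
  · exact hcore y hy hxy.symm
  rcases eq_or_ne y c with rfl | hyc
  · rw [sliceEss_comm]
    exact hcore x hx hxc
  have hcx := hcore x hx hxc
  rw [sliceEss_comm]
  refine grow y x hxy.symm (hcx ▸ sliceEss_subset_sliceEss hyc hxy.symm (hcx ▸ hy) ?_ hxy)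
  exact right_notMem_sliceEss hxc.symm

namespace IsCore

variable {W : Set (Fin n)}

theorem not_essAt_idMinor (hf : MinorsDropThree f) (hW : IsCore f W) {x y : Fin n}
    (hxy : x ≠ y) (hx : x ∉ W) (hy : y ∉ W) : ¬ EssAt (idMinor f x y) y := by
  intro hess
  have hWn : W.ncard + 4 ≤ n := by
    have := hf x y hxy
    have := hW x y hxy hx hy ▸ ncard_sliceEss_lt hxy hess
    omega
  obtain ⟨z, hzx, hzy, hzW⟩ := exists_ne_ne_notMem (s := W) (by omega) x y
  obtain ⟨w, hwx, hwy, hwzW⟩ := exists_ne_ne_notMem (s := insert z W)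
    (by have := Set.ncard_insert_le z W; omega) x y
  obtain ⟨hwz, hwW⟩ : w ≠ z ∧ w ∉ W := by simpa [not_or] using hwzW
  obtain ⟨a, b, hab, hne⟩ := hess
  -- A tuple on the slice `x_x = x_y` whose `z`- and `w`-entries are set to a common value lies
  -- on the slice `x_z = x_w` too, where neither `x` nor `y` is essential.
  let flat (c : Fin n → A) : Fin n → A := update (update (update c x (c y)) z (a y)) w (a y)
  have hflat (c : Fin n → A) : f (flat c) = idMinor f x y c := by
    refine apply_eq_of_eqOn_sliceEss (j := y) ?_ (update_mem_slice c x y) (fun r hr => ?_) ?_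
    · simp [flat, update_apply, Ne.symm hzx, Ne.symm hwx, Ne.symm hzy, Ne.symm hwy]
    · rw [hW x y hxy hx hy] at hr
      simp [flat, ne_of_mem_of_not_mem hr hzW, ne_of_mem_of_not_mem hr hwW,
        ne_of_mem_of_not_mem hr hx]
    · left
      simp [flat, hxy.symm, Ne.symm hzy, Ne.symm hwy]
  have hflat_eq : f (flat a) = f (flat b) := by
    refine apply_eq_of_eqOn_sliceEss (i := z) (j := w) ?_ ?_ (fun r hr => ?_) (Or.inl ?_)
    · simp [flat, Ne.symm hwz]
    · simp [flat, Ne.symm hwz]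
    · rw [hW z w (Ne.symm hwz) hzW hwW] at hr
      simp [flat, ne_of_mem_of_not_mem hr hzW, ne_of_mem_of_not_mem hr hwW,
        ne_of_mem_of_not_mem hr hx, hab r (ne_of_mem_of_not_mem hr hy)]
    · simp [flat]
  exact hne (by rw [← hflat, ← hflat, hflat_eq])

theorem apply_eq_piecewise [DecidablePred (· ∈ W)] (hf : MinorsDropThree f) (hW : IsCore f W)
    {x y : Fin n} (hxy : x ≠ y) (hx : x ∉ W) (hy : y ∉ W) {a : Fin n → A} (ha : a x = a y)
    (v : A) : f a = f (W.piecewise a fun _ => v) :=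
  apply_eq_of_eqOn_sliceEss ha (by simp [hx, hy])
    (hW x y hxy hx hy ▸ (Set.piecewise_eqOn W a _).symm)
    (Or.inr (hW.not_essAt_idMinor hf hxy hx hy))

theorem mem_sliceEss (hf : MinorsDropThree f) (hW : IsCore f W) (hWn : W.ncard + 2 ≤ n)
    {v c w : Fin n} (hv : v ∈ W) (hc : c ∉ W) (hw : w ∈ W) (hwv : w ≠ v) :
    w ∈ sliceEss f v c := by
  classical
  obtain ⟨x, hx⟩ := exists_notMem_of_ncard_lt (s := W) (by omega)
  obtain ⟨y, hy⟩ := exists_notMem_of_ncard_lt (s := insert x W) (by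
    have := Set.ncard_insert_le x W
    omega)
  simp only [Set.mem_insert_iff, not_or] at hy
  have hxy : x ≠ y := Ne.symm hy.1
  obtain ⟨a, b, ha, hb, hab, hne⟩ : w ∈ sliceEss f x y := hW x y hxy hx hy.2 ▸ hw
  refine ⟨W.piecewise a fun _ => a v, W.piecewise b fun _ => b v, by simp [hv, hc],
    by simp [hv, hc], fun r hr => ?_, ?_⟩
  · by_cases hrW : r ∈ W
    · simp [hrW, hab r hr]
    · simp [hrW, hab v hwv.symm]
  · rwa [← hW.apply_eq_piecewise hf hxy hx hy.2 ha, ← hW.apply_eq_piecewise hf hxy hx hy.2 hb]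

theorem mem_sliceEss_of_apply_ne_piecewise [DecidablePred (· ∈ W)] (hf : MinorsDropThree f)
    (hW : IsCore f W) (hWn : W.ncard + 2 ≤ n) {γ : Fin n → A} {v : A}
    (hγ : f γ ≠ f (W.piecewise γ fun _ => v)) {p q z : Fin n} (hγpq : γ p = γ q) (hz : z ∉ W)
    (hzp : z ≠ p) (hzq : z ≠ q) : z ∈ sliceEss f p q := by
  by_contra hzE
  obtain ⟨u, hu⟩ := exists_notMem_of_ncard_lt (s := insert z W) (by
    have := Set.ncard_insert_le z W
    omega)
  simp only [Set.mem_insert_iff, not_or] at hu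
  -- Making `γ` repeat a value outside `W` changes neither side of `hγ`.
  have hval : f (update γ z (γ u)) = f γ :=
    apply_eq_of_not_essAtOn hzE (by simpa [hzp.symm, hzq.symm] using hγpq) hγpq
      fun r hr => update_of_ne hr _ _
  have hpw : W.piecewise (update γ z (γ u)) (fun _ => v) = W.piecewise γ fun _ => v := by
    funext r
    by_cases hrW : r ∈ W
    · simp [hrW, ne_of_mem_of_not_mem hrW hz]
    · simp [hrW]
  refine hγ ?_
  rw [← hval, hW.apply_eq_piecewise hf (Ne.symm hu.1) hz hu.2 (by simp [hu.1]) v, hpw]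

theorem false_of_compl_subset (hf : MinorsDropThree f) {V : Set (Fin n)} (hV : IsCore f V)
    (hW : IsCore f W) (hVn : V.ncard + 2 ≤ n) (hWn : W.ncard + 2 ≤ n) (hVW : Vᶜ ⊆ W) :
    False := by
  obtain ⟨m, hm⟩ := exists_notMem_of_ncard_lt (s := V) (by omega)
  obtain ⟨m', hm'⟩ := exists_notMem_of_ncard_lt (s := W) (by omega)
  have hm'V : m' ∈ V := by_contra fun h => hm' (hVW h)
  obtain ⟨r, hrm', hrm, hr⟩ := exists_notMem_sliceEss hf (ne_of_mem_of_not_mem hm'V hm)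
  by_cases hrV : r ∈ V
  · exact hr (hV.mem_sliceEss hf hVn hm'V hm hrV hrm')
  · exact hr (sliceEss_comm f m m' ▸ hW.mem_sliceEss hf hWn (hVW hm) hm' (hVW hrV) hrm)

theorem false_of_apply_ne_piecewise [DecidablePred (· ∈ W)] (hf : MinorsDropThree f)
    (hW : IsCore f W) (hWn : W.ncard + 3 ≤ n) {γ : Fin n → A} {v : A}
    (hγ : f γ ≠ f (W.piecewise γ fun _ => v)) {p q : Fin n} (hpq : p ≠ q)
    (hγpq : γ p = γ q) (hp : p ∈ W) : False := by
  by_cases hq : q ∈ W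
  · obtain ⟨W', hWW', hW'n, hW'⟩ := exists_isCore hf hpq (C := Wᶜ) fun z hz =>
      hW.mem_sliceEss_of_apply_ne_piecewise hf (by omega) hγ hγpq hz
        (ne_of_mem_of_not_mem hp hz).symm (ne_of_mem_of_not_mem hq hz).symm
    exact hW.false_of_compl_subset hf hW' (by omega) (by omega) hWW'
  · obtain ⟨r, hrp, hrq, hr⟩ := exists_notMem_sliceEss hf hpq
    by_cases hrW : r ∈ W
    · exact hr (hW.mem_sliceEss hf (by omega) hp hq hrW hrp)
    · exact hr (hW.mem_sliceEss_of_apply_ne_piecewise hf (by omega) hγ hγpq hrW hrp hrq)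

end IsCore

theorem exists_apply_ne_piecewise {W : Set (Fin n)} [DecidablePred (· ∈ W)] {m : Fin n}
    (hm : m ∉ W) (hess : EssAt f m) (v : A) : ∃ γ, f γ ≠ f (W.piecewise γ fun _ => v) := by
  obtain ⟨a, b, hab, hne⟩ := hess
  have hpw : W.piecewise a (fun _ => v) = W.piecewise b fun _ => v := by
    funext r
    by_cases hrW : r ∈ W
    · simp [hrW, hab r (ne_of_mem_of_not_mem hrW hm)]
    · simp [hrW]
  by_contra! h
  exact hne (by rw [h a, h b, hpw])

theorem false_of_minorsDropThree [Fintype A] (hn : Fintype.card A < n)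
    (hdep : ∀ i, EssAt f i) (hf : MinorsDropThree f) : False := by
  classical
  obtain ⟨a, b, -, hab⟩ := hdep ⟨0, by omega⟩
  obtain ⟨i, hi⟩ : ∃ i, a i ≠ b i := by
    by_contra! h
    exact hab (congrArg f (funext h))
  have : Nontrivial (Fin n) :=
    Fin.nontrivial_iff_two_le.2 (by have := Fintype.one_lt_card_iff.2 ⟨_, _, hi⟩; omega)
  obtain ⟨x, y, hxy⟩ := exists_pair_ne (Fin n)
  obtain ⟨V, -, hVn, hV⟩ := exists_isCore hf hxy (Set.empty_subset _)
  obtain ⟨m, hm⟩ := exists_notMem_of_ncard_lt (s := V) (by omega)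
  obtain ⟨γ, hγ⟩ := exists_apply_ne_piecewise hm (hdep m) (a i)
  obtain ⟨p, q, hpq, hγpq⟩ := Fintype.exists_ne_map_eq_of_card_lt γ (by simpa)
  by_cases hp : p ∈ V
  · exact hV.false_of_apply_ne_piecewise hf hVn hγ hpq hγpq hp
  by_cases hq : q ∈ V
  · exact hV.false_of_apply_ne_piecewise hf hVn hγ hpq.symm hγpq.symm hq
  exact hγ (hV.apply_eq_piecewise hf hpq hp hq hγpq _)

end ArityGap

theorem stmt11 {A B : Type*} [Fintype A] {n : ℕ} (hn : Fintype.card A < n)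
    (f : (Fin n → A) → B) (hdep : ∀ i : Fin n, EssAt f i) :
    arityGap f ≤ 2 := by
  by_contra! hgap
  refine ArityGap.false_of_minorsDropThree hn hdep fun i j hij => ?_
  have hess : essArity f = n := by
    rw [essArity, Set.eq_univ_of_forall (s := {i | EssAt f i}) hdep, Set.ncard_univ, Nat.card_fin]
  have : arityGap f ≤ essArity f - essArity (idMinor f i j) :=
    Nat.sInf_le ⟨i, j, hij, hdep i, hdep j, rfl⟩
  omega
end

section
/- Suppose f : A^3 → B depends on all three of its variables. Then gap f = 2 if and only if there exist a nonconstant unary function h : A → B and i_1, i_2, i_3 ∈ {0,1} such that f(x_1, x_0, x_0) = h(x_{i_1}), f(x_0, x_1, x_0) = h(x_{i_2}), and f(x_0, x_0, x_1) = h(x_{i_3}) for all x_0, x_1 ∈ A. -/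
section helpers
variable {A B : Type*}

lemma essArity_const' {n : ℕ} {F : (Fin n → A) → B} (hc : ∀ a b, F a = F b) :
    essArity F = 0 := by
  have hset : {i : Fin n | EssAt F i} = ∅ := by
    ext i
    simp only [Set.mem_setOf_eq, Set.mem_empty_iff_false, iff_false]
    rintro ⟨a, b, -, hne⟩
    exact hne (hc a b)
  rw [essArity, hset, Set.ncard_empty]

lemma essArity_unary' {n : ℕ} {h : A → B} (hne : ∃ u v : A, h u ≠ h v) (r : Fin n) :
    essArity (fun a : Fin n → A => h (a r)) = 1 := by
  obtain ⟨u, v, huv⟩ := hne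
  have hset : {i : Fin n | EssAt (fun a : Fin n → A => h (a r)) i} = {r} := by
    ext i
    simp only [Set.mem_setOf_eq, Set.mem_singleton_iff]
    constructor
    · rintro ⟨a, b, hab, hne'⟩
      by_contra hir
      exact hne' (by show h (a r) = h (b r); rw [hab r (Ne.symm hir)])
    · intro hi
      subst hi
      refine ⟨fun _ => u, Function.update (fun _ => u) i v, fun j hj => ?_, ?_⟩
      · rw [Function.update_of_ne hj]
      · show h u ≠ h (Function.update (fun _ => u) i v i)
        rw [Function.update_self]
        exact huv
  rw [essArity, hset, Set.ncard_singleton]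

lemma essArity_eq_one_of_eq' {n : ℕ} {F : (Fin n → A) → B} {h : A → B}
    (hne : ∃ u v : A, h u ≠ h v) (r : Fin n) (hF : ∀ a, F a = h (a r)) :
    essArity F = 1 := by
  have hFe : F = fun a => h (a r) := funext hF
  rw [hFe]; exact essArity_unary' hne r

lemma essAt_proj2_fst' {n : ℕ} (g : A → A → B) {p q : Fin n} (hpq : p ≠ q)
    (hdep : ∃ x x' y, g x y ≠ g x' y) :
    EssAt (fun a : Fin n → A => g (a p) (a q)) p := by
  obtain ⟨x, x', y, hxy⟩ := hdep
  refine ⟨fun i => if i = p then x else y, fun i => if i = p then x' else y, fun j hj => ?_, ?_⟩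
  · simp [hj]
  · show g (if p = p then x else y) (if q = p then x else y) ≠
        g (if p = p then x' else y) (if q = p then x' else y)
    rw [if_pos rfl, if_pos rfl, if_neg hpq.symm, if_neg hpq.symm]
    exact hxy

lemma essAt_proj2_snd' {n : ℕ} (g : A → A → B) {p q : Fin n} (hpq : p ≠ q)
    (hdep : ∃ x y y', g x y ≠ g x y') :
    EssAt (fun a : Fin n → A => g (a p) (a q)) q := by
  obtain ⟨x, y, y', hxy⟩ := hdep
  refine ⟨fun i => if i = q then y else x, fun i => if i = q then y' else x, fun j hj => ?_, ?_⟩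
  · simp [hj]
  · show g (if p = q then y else x) (if q = q then y else x) ≠
        g (if p = q then y' else x) (if q = q then y' else x)
    rw [if_pos rfl, if_pos rfl, if_neg hpq, if_neg hpq]
    exact hxy

lemma essArity_le_one_cases' {n : ℕ} (g : A → A → B) {p q : Fin n} (hpq : p ≠ q)
    (hle : essArity (fun a : Fin n → A => g (a p) (a q)) ≤ 1) :
    (∀ x x' y, g x y = g x' y) ∨ (∀ x y y', g x y = g x y') := by
  by_contra hcon
  push_neg at hcon
  obtain ⟨h1, h2⟩ := hcon
  obtain ⟨x1, x1', y1, hd1⟩ := h1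
  obtain ⟨x2, y2, y2', hd2⟩ := h2
  have e1 : EssAt (fun a : Fin n → A => g (a p) (a q)) p :=
    essAt_proj2_fst' g hpq ⟨x1, x1', y1, hd1⟩
  have e2 : EssAt (fun a : Fin n → A => g (a p) (a q)) q :=
    essAt_proj2_snd' g hpq ⟨x2, y2, y2', hd2⟩
  have hsub : ({p, q} : Set (Fin n)) ⊆ {i | EssAt (fun a : Fin n → A => g (a p) (a q)) i} := by
    intro i hi
    rcases hi with rfl | hi
    · exact e1
    · rcases hi with rfl
      exact e2
  have h2le : 2 ≤ essArity (fun a : Fin n → A => g (a p) (a q)) := by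
    have hc := Set.ncard_le_ncard hsub (Set.toFinite _)
    rw [Set.ncard_pair hpq] at hc
    exact hc
  exact absurd (h2le.trans hle) (by decide)

end helpers

theorem stmt19 {A B : Type*} [Fintype A] (h2 : 2 ≤ Fintype.card A)
    (f : (Fin 3 → A) → B) (hdep : ∀ i : Fin 3, EssAt f i) :
    arityGap f = 2 ↔
      ∃ h : A → B, (∃ u v : A, h u ≠ h v) ∧
        ∃ i₁ i₂ i₃ : Fin 2, ∀ x₀ x₁ : A,
          f ![x₁, x₀, x₀] = h (![x₀, x₁] i₁) ∧
          f ![x₀, x₁, x₀] = h (![x₀, x₁] i₂) ∧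
          f ![x₀, x₀, x₁] = h (![x₀, x₁] i₃) := by
  have harity : essArity f = 3 := by
    have huniv : {i : Fin 3 | EssAt f i} = Set.univ := Set.eq_univ_of_forall hdep
    rw [essArity, huniv, Set.ncard_univ, Nat.card_eq_fintype_card, Fintype.card_fin]
  have m01 : idMinor f 0 1 = fun a : Fin 3 → A => f ![a 1, a 1, a 2] := by
    funext a
    show f (Function.update a 0 (a 1)) = _
    congr 1
    ext k
    fin_cases k <;> simp [Function.update]
  have m10 : idMinor f 1 0 = fun a : Fin 3 → A => f ![a 0, a 0, a 2] := by
    funext a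
    show f (Function.update a 1 (a 0)) = _
    congr 1
    ext k
    fin_cases k <;> simp [Function.update]
  have m02 : idMinor f 0 2 = fun a : Fin 3 → A => f ![a 2, a 1, a 2] := by
    funext a
    show f (Function.update a 0 (a 2)) = _
    congr 1
    ext k
    fin_cases k <;> simp [Function.update]
  have m20 : idMinor f 2 0 = fun a : Fin 3 → A => f ![a 0, a 1, a 0] := by
    funext a
    show f (Function.update a 2 (a 0)) = _
    congr 1
    ext k
    fin_cases k <;> simp [Function.update]
  have m12 : idMinor f 1 2 = fun a : Fin 3 → A => f ![a 0, a 2, a 2] := by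
    funext a
    show f (Function.update a 1 (a 2)) = _
    congr 1
    ext k
    fin_cases k <;> simp [Function.update]
  have m21 : idMinor f 2 1 = fun a : Fin 3 → A => f ![a 0, a 1, a 1] := by
    funext a
    show f (Function.update a 2 (a 1)) = _
    congr 1
    ext k
    fin_cases k <;> simp [Function.update]
  constructor
  · intro hgap
    have hub : ∀ i j : Fin 3, i ≠ j → essArity (idMinor f i j) ≤ 1 := by
      intro i j hij
      have hmem : (essArity f - essArity (idMinor f i j)) ∈
          {d | ∃ i j : Fin 3, i ≠ j ∧ EssAt f i ∧ EssAt f j ∧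
            d = essArity f - essArity (idMinor f i j)} :=
        ⟨i, j, hij, hdep i, hdep j, rfl⟩
      have hle : arityGap f ≤ essArity f - essArity (idMinor f i j) := Nat.sInf_le hmem
      rw [hgap, harity] at hle
      omega
    have c2 : (∀ x x' y : A, f ![x, x, y] = f ![x', x', y]) ∨
        (∀ x y y' : A, f ![x, x, y] = f ![x, x, y']) := essArity_le_one_cases'
      (fun x y => f ![x, x, y])
      (show (1 : Fin 3) ≠ 2 by decide)
      (by rw [show (fun a : Fin 3 → A => f ![a 1, a 1, a 2]) = idMinor f 0 1 from m01.symm]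
          exact hub 0 1 (by decide))
    have c1 : (∀ x x' y : A, f ![x, y, x] = f ![x', y, x']) ∨
        (∀ x y y' : A, f ![x, y, x] = f ![x, y', x]) := essArity_le_one_cases'
      (fun x y => f ![x, y, x])
      (show (2 : Fin 3) ≠ 1 by decide)
      (by rw [show (fun a : Fin 3 → A => f ![a 2, a 1, a 2]) = idMinor f 0 2 from m02.symm]
          exact hub 0 2 (by decide))
    have c0 : (∀ x x' y : A, f ![y, x, x] = f ![y, x', x']) ∨
        (∀ x y y' : A, f ![y, x, x] = f ![y', x, x]) := essArity_le_one_cases'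
      (fun x y => f ![y, x, x])
      (show (2 : Fin 3) ≠ 0 by decide)
      (by rw [show (fun a : Fin 3 → A => f ![a 0, a 2, a 2]) = idMinor f 1 2 from m12.symm]
          exact hub 1 2 (by decide))
    set h : A → B := fun z => f ![z, z, z] with hhdef
    have hg₂ : ∃ k : Fin 2, ∀ x y : A, f ![x, x, y] = h (![x, y] k) := by
      rcases c2 with hl | hr
      · exact ⟨1, fun x y => by rw [hl x y y]; simp [hhdef]⟩
      · exact ⟨0, fun x y => by rw [hr x y x]; simp [hhdef]⟩
    have hg₁ : ∃ k : Fin 2, ∀ x y : A, f ![x, y, x] = h (![x, y] k) := by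
      rcases c1 with hl | hr
      · exact ⟨1, fun x y => by rw [hl x y y]; simp [hhdef]⟩
      · exact ⟨0, fun x y => by rw [hr x y x]; simp [hhdef]⟩
    have hg₀ : ∃ k : Fin 2, ∀ x y : A, f ![y, x, x] = h (![x, y] k) := by
      rcases c0 with hl | hr
      · exact ⟨1, fun x y => by rw [hl x y y]; simp [hhdef]⟩
      · exact ⟨0, fun x y => by rw [hr x y x]; simp [hhdef]⟩
    obtain ⟨k₀, hg₀s⟩ := hg₀
    obtain ⟨k₁, hg₁s⟩ := hg₁
    obtain ⟨k₂, hg₂s⟩ := hg₂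
    have hmem2 : (2:ℕ) ∈ {d | ∃ i j : Fin 3, i ≠ j ∧ EssAt f i ∧ EssAt f j ∧
        d = essArity f - essArity (idMinor f i j)} := by
      rw [← hgap]
      exact Nat.sInf_mem ⟨_, 0, 1, by decide, hdep 0, hdep 1, rfl⟩
    have hnc : ∃ u v : A, h u ≠ h v := by
      by_contra hcon
      push_neg at hcon
      have hall0 : ∀ i j : Fin 3, i ≠ j → essArity (idMinor f i j) = 0 := by
        intro i j hij
        apply essArity_const'
        intro a b
        fin_cases i <;> fin_cases j
        · exact absurd rfl hij
        · exact ((congrFun m01 a).trans (hg₂s (a 1) (a 2))).trans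
            (((hcon _ _).trans (hg₂s (b 1) (b 2)).symm).trans (congrFun m01 b).symm)
        · exact ((congrFun m02 a).trans (hg₁s (a 2) (a 1))).trans
            (((hcon _ _).trans (hg₁s (b 2) (b 1)).symm).trans (congrFun m02 b).symm)
        · exact ((congrFun m10 a).trans (hg₂s (a 0) (a 2))).trans
            (((hcon _ _).trans (hg₂s (b 0) (b 2)).symm).trans (congrFun m10 b).symm)
        · exact absurd rfl hij
        · exact ((congrFun m12 a).trans (hg₀s (a 2) (a 0))).trans
            (((hcon _ _).trans (hg₀s (b 2) (b 0)).symm).trans (congrFun m12 b).symm)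
        · exact ((congrFun m20 a).trans (hg₁s (a 0) (a 1))).trans
            (((hcon _ _).trans (hg₁s (b 0) (b 1)).symm).trans (congrFun m20 b).symm)
        · exact ((congrFun m21 a).trans (hg₀s (a 1) (a 0))).trans
            (((hcon _ _).trans (hg₀s (b 1) (b 0)).symm).trans (congrFun m21 b).symm)
        · exact absurd rfl hij
      obtain ⟨i, j, hij, -, -, hd⟩ := hmem2
      rw [harity, hall0 i j hij] at hd
      omega
    exact ⟨h, hnc, k₀, k₁, k₂, fun x₀ x₁ => ⟨hg₀s x₀ x₁, hg₁s x₀ x₁, hg₂s x₀ x₁⟩⟩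
  · rintro ⟨h, ⟨u, v, huv⟩, i₁, i₂, i₃, heq⟩
    have hg₀s : ∀ x y : A, f ![y, x, x] = h (![x, y] i₁) := fun x y => (heq x y).1
    have hg₁s : ∀ x y : A, f ![x, y, x] = h (![x, y] i₂) := fun x y => (heq x y).2.1
    have hg₂s : ∀ x y : A, f ![x, x, y] = h (![x, y] i₃) := fun x y => (heq x y).2.2
    have hne : ∃ u v : A, h u ≠ h v := ⟨u, v, huv⟩
    have key : ∀ i j : Fin 3, i ≠ j → essArity (idMinor f i j) = 1 := by
      intro i j hij
      fin_cases i <;> fin_cases j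
      · exact absurd rfl hij
      · -- (0,1)
        fin_cases i₃
        · exact essArity_eq_one_of_eq' hne 1 (fun a =>
            ((congrFun m01 a).trans (hg₂s (a 1) (a 2))).trans (by simp))
        · exact essArity_eq_one_of_eq' hne 2 (fun a =>
            ((congrFun m01 a).trans (hg₂s (a 1) (a 2))).trans (by simp))
      · -- (0,2)
        fin_cases i₂
        · exact essArity_eq_one_of_eq' hne 2 (fun a =>
            ((congrFun m02 a).trans (hg₁s (a 2) (a 1))).trans (by simp))
        · exact essArity_eq_one_of_eq' hne 1 (fun a =>
            ((congrFun m02 a).trans (hg₁s (a 2) (a 1))).trans (by simp))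
      · -- (1,0)
        fin_cases i₃
        · exact essArity_eq_one_of_eq' hne 0 (fun a =>
            ((congrFun m10 a).trans (hg₂s (a 0) (a 2))).trans (by simp))
        · exact essArity_eq_one_of_eq' hne 2 (fun a =>
            ((congrFun m10 a).trans (hg₂s (a 0) (a 2))).trans (by simp))
      · exact absurd rfl hij
      · -- (1,2)
        fin_cases i₁
        · exact essArity_eq_one_of_eq' hne 2 (fun a =>
            ((congrFun m12 a).trans (hg₀s (a 2) (a 0))).trans (by simp))
        · exact essArity_eq_one_of_eq' hne 0 (fun a =>
            ((congrFun m12 a).trans (hg₀s (a 2) (a 0))).trans (by simp))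
      · -- (2,0)
        fin_cases i₂
        · exact essArity_eq_one_of_eq' hne 0 (fun a =>
            ((congrFun m20 a).trans (hg₁s (a 0) (a 1))).trans (by simp))
        · exact essArity_eq_one_of_eq' hne 1 (fun a =>
            ((congrFun m20 a).trans (hg₁s (a 0) (a 1))).trans (by simp))
      · -- (2,1)
        fin_cases i₁
        · exact essArity_eq_one_of_eq' hne 1 (fun a =>
            ((congrFun m21 a).trans (hg₀s (a 1) (a 0))).trans (by simp))
        · exact essArity_eq_one_of_eq' hne 0 (fun a =>
            ((congrFun m21 a).trans (hg₀s (a 1) (a 0))).trans (by simp))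
      · exact absurd rfl hij
    have hm2 : (2:ℕ) = essArity f - essArity (idMinor f 0 1) := by
      rw [harity, key 0 1 (by decide)]
    apply le_antisymm
    · exact Nat.sInf_le ⟨0, 1, by decide, hdep 0, hdep 1, hm2⟩
    · refine le_csInf ⟨2, 0, 1, by decide, hdep 0, hdep 1, hm2⟩ ?_
      rintro d ⟨i, j, hij, -, -, rfl⟩
      rw [harity, key i j hij]
end
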